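/- arXiv:math/0601111 — 9 statements merged into one kernel-verified Lean document; each statement's English description precedes it below -/
import Mathlib

section
/- Let M be a normalized log-convex sequence and define h_M(t) = inf_{j ≥ 0} t^j M_j for t ≥ 0. Then for every j, M_j = sup_{t > 0} t^{-j} h_M(t). -/
/-!
Always `t ^ j * M j ≥ h_M t`, so `t ^ (-j) * h_M t ≤ M j`. Equality is attained at
`t₀ = M j / M (j + 1)`: since the ratios `M (k + 1) / M k` increase, the sequence
`k ↦ t₀ ^ k * M k` decreases up to `k = j` and increases afterwards, so its infimum is
its value at `j`.
-/

theorem Nat.apply_le_of_succ_le_of_le_succ {α : Type*} [Preorder α] {g : ℕ → α} {j : ℕ}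
    (hdown : ∀ n < j, g (n + 1) ≤ g n) (hup : ∀ n ≥ j, g n ≤ g (n + 1)) (k : ℕ) :
    g j ≤ g k := by
  rcases le_total k j with hkj | hjk
  · induction hkj using Nat.decreasingInduction with
    | self => exact le_rfl
    | of_succ n hn ih => exact ih.trans (hdown n hn)
  · exact Nat.rel_of_forall_rel_succ_of_le_of_le (· ≤ ·) hup le_rfl hjk

section LogConvex

variable {M : ℕ → ℝ}

theorem ratio_le_iff_div_mul_le (hpos : ∀ k, 0 < M k) (j k : ℕ) :
    M (k + 1) / M k ≤ M (j + 1) / M j ↔ M j / M (j + 1) * M (k + 1) ≤ M k := by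
  rw [div_le_div_iff₀ (hpos k) (hpos j), div_mul_eq_mul_div, div_le_iff₀ (hpos (j + 1))]
  constructor <;> intro h <;> linarith

theorem le_ratio_iff_le_div_mul (hpos : ∀ k, 0 < M k) (j k : ℕ) :
    M (j + 1) / M j ≤ M (k + 1) / M k ↔ M k ≤ M j / M (j + 1) * M (k + 1) := by
  rw [div_le_div_iff₀ (hpos j) (hpos k), div_mul_eq_mul_div, le_div_iff₀ (hpos (j + 1))]
  constructor <;> intro h <;> linarith

theorem pow_mul_le_pow_mul_of_monotone_ratio (hpos : ∀ k, 0 < M k)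
    (hratio : Monotone fun k => M (k + 1) / M k) (j k : ℕ) :
    (M j / M (j + 1)) ^ j * M j ≤ (M j / M (j + 1)) ^ k * M k := by
  set t := M j / M (j + 1)
  have ht : 0 < t := div_pos (hpos j) (hpos (j + 1))
  have hsucc (n : ℕ) : t ^ (n + 1) * M (n + 1) = t ^ n * (t * M (n + 1)) := by ring
  refine Nat.apply_le_of_succ_le_of_le_succ (g := fun k => t ^ k * M k)
    (fun n hn => ?_) (fun n hn => ?_) k
  · rw [hsucc]
    gcongr
    exact (ratio_le_iff_div_mul_le hpos j n).mp (hratio hn.le)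
  · rw [hsucc]
    gcongr
    exact (le_ratio_iff_le_div_mul hpos j n).mp (hratio hn)

theorem sInf_pow_mul_le (hnonneg : ∀ k, 0 ≤ M k) {t : ℝ} (ht : 0 ≤ t) (j : ℕ) :
    sInf {y : ℝ | ∃ k : ℕ, y = t ^ k * M k} ≤ t ^ j * M j :=
  csInf_le ⟨0, by rintro _ ⟨k, rfl⟩; exact mul_nonneg (pow_nonneg ht k) (hnonneg k)⟩ ⟨j, rfl⟩

theorem zpow_neg_natCast_mul_pow_mul {t : ℝ} (ht : t ≠ 0) (j : ℕ) (a : ℝ) :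
    t ^ (-(j : ℤ)) * (t ^ j * a) = a := by
  rw [zpow_neg, zpow_natCast, inv_mul_cancel_left₀ (pow_ne_zero j ht)]

end LogConvex

theorem stmt_1_general (M : ℕ → ℝ) (hpos : ∀ j, 0 < M j)
    (hratio : Monotone fun j => M (j + 1) / M j)
    (hM : ℝ → ℝ) (hhM : ∀ t : ℝ, 0 ≤ t → hM t = sInf {y : ℝ | ∃ j : ℕ, y = t ^ j * M j}) :
    ∀ j : ℕ, M j = sSup {y : ℝ | ∃ t : ℝ, 0 < t ∧ y = t ^ (-(j : ℤ)) * hM t} := by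
  intro j
  set t₀ := M j / M (j + 1)
  have ht₀ : 0 < t₀ := div_pos (hpos j) (hpos (j + 1))
  have hmin : IsLeast {y : ℝ | ∃ k : ℕ, y = t₀ ^ k * M k} (t₀ ^ j * M j) :=
    ⟨⟨j, rfl⟩, by rintro _ ⟨k, rfl⟩; exact pow_mul_le_pow_mul_of_monotone_ratio hpos hratio j k⟩
  have hmax : IsGreatest {y : ℝ | ∃ t : ℝ, 0 < t ∧ y = t ^ (-(j : ℤ)) * hM t} (M j) := by
    refine ⟨⟨t₀, ht₀, ?_⟩, ?_⟩
    · rw [hhM t₀ ht₀.le, hmin.csInf_eq, zpow_neg_natCast_mul_pow_mul ht₀.ne']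
    · rintro _ ⟨t, ht, rfl⟩
      calc t ^ (-(j : ℤ)) * hM t ≤ t ^ (-(j : ℤ)) * (t ^ j * M j) := by
            rw [hhM t ht.le]
            exact mul_le_mul_of_nonneg_left (sInf_pow_mul_le (fun k => (hpos k).le) ht.le j)
              (zpow_pos ht _).le
        _ = M j := zpow_neg_natCast_mul_pow_mul ht.ne' j (M j)
  exact hmax.csSup_eq.symm

/-- For a normalized log-convex sequence `M`, with `h_M t = inf_j t^j * M j`,
one recovers `M j = sup_{t > 0} t^(-j) * h_M t`. -/
theorem stmt_1 (M : ℕ → ℝ) (hpos : ∀ j, 0 < M j) (h0 : M 0 = 1)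
    (hmono : Monotone M) (hratio : Monotone fun j => M (j + 1) / M j)
    (hM : ℝ → ℝ) (hhM : ∀ t : ℝ, 0 ≤ t → hM t = sInf {y : ℝ | ∃ j : ℕ, y = t ^ j * M j}) :
    ∀ j : ℕ, M j = sSup {y : ℝ | ∃ t : ℝ, 0 < t ∧ y = t ^ (-(j : ℤ)) * hM t} :=
  stmt_1_general M hpos hratio hM hhM
end

section
/- Let M be a tame sequence (normalized, log-convex, of moderate growth: M_{j+k} ≤ A^{j+k} M_j M_k for some A > 0). Then there exists a constant B > 0 such that h_M(t) ≤ (h_M(B t))^2 for all t ≥ 0, where h_M(t) = inf_j t^j M_j. -/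
/-!
Taking `k = j` in the moderate growth condition gives `t^(2j) M_(2j) ≤ ((A t)^j M_j)^2`, so
`h_M t` is at most the infimum of the squares `((A t)^j M_j)^2`; since squaring is monotone and
continuous on `[0, ∞)`, that infimum is `h_M (A t)^2`. Hence `B = A` works.
-/

open Set

theorem sInf_setOf_exists_eq_eq_iInf {α ι : Type*} [InfSet α] (g : ι → α) :
    sInf {y | ∃ j, y = g j} = ⨅ j, g j := by
  simp only [iInf, range, eq_comm]

theorem Real.iInf_sq {ι : Sort*} [Nonempty ι] {f : ι → ℝ} (hf : ∀ i, 0 ≤ f i) :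
    (⨅ i, f i) ^ 2 = ⨅ i, f i ^ 2 := by
  have hsub : range f ⊆ Ici 0 := range_subset_iff.2 hf
  have hbdd : BddBelow (range f) := ⟨0, hsub⟩
  rw [iInf, MonotoneOn.map_csInf_of_continuousWithinAt (continuous_pow 2).continuousWithinAt
    ((pow_left_monotoneOn (M₀ := ℝ)).mono hsub) (range_nonempty f) hbdd, ← range_comp]
  rfl

theorem iInf_pow_mul_le_sq_iInf {M : ℕ → ℝ} (hM : ∀ j, 0 ≤ M j) {A t : ℝ} (hA : 0 ≤ A)
    (ht : 0 ≤ t) (hdouble : ∀ j, M (j + j) ≤ A ^ (j + j) * M j * M j) :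
    ⨅ j, t ^ j * M j ≤ (⨅ j, (A * t) ^ j * M j) ^ 2 := by
  have hnonneg : ∀ s, 0 ≤ s → ∀ j, 0 ≤ s ^ j * M j := fun s hs j =>
    mul_nonneg (pow_nonneg hs j) (hM j)
  have hbdd : BddBelow (range fun k => t ^ k * M k) :=
    ⟨0, range_subset_iff.2 (hnonneg t ht)⟩
  rw [Real.iInf_sq (hnonneg _ (mul_nonneg hA ht))]
  refine le_ciInf fun j => ?_
  calc ⨅ k, t ^ k * M k ≤ t ^ (j + j) * M (j + j) := ciInf_le hbdd (j + j)
    _ ≤ t ^ (j + j) * (A ^ (j + j) * M j * M j) := by gcongr; exact hdouble j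
    _ = ((A * t) ^ j * M j) ^ 2 := by ring

theorem stmt_2_general (M : ℕ → ℝ) (hpos : ∀ j, 0 < M j)
    (hmod : ∃ A : ℝ, 0 < A ∧ ∀ j k : ℕ, M (j + k) ≤ A ^ (j + k) * M j * M k)
    (hM : ℝ → ℝ) (hhM : ∀ t : ℝ, 0 ≤ t → hM t = sInf {y : ℝ | ∃ j : ℕ, y = t ^ j * M j}) :
    ∃ B : ℝ, 0 < B ∧ ∀ t : ℝ, 0 ≤ t → hM t ≤ (hM (B * t)) ^ 2 := by
  obtain ⟨A, hA, hmodA⟩ := hmod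
  refine ⟨A, hA, fun t ht => ?_⟩
  rw [hhM t ht, hhM (A * t) (mul_nonneg hA.le ht), sInf_setOf_exists_eq_eq_iInf,
    sInf_setOf_exists_eq_eq_iInf]
  exact iInf_pow_mul_le_sq_iInf (fun j => (hpos j).le) hA.le ht fun j => hmodA j j

/-- For a tame sequence `M` (normalized, log-convex, of moderate growth), there is a
constant `B > 0` with `h_M t ≤ (h_M (B * t))^2` for all `t ≥ 0`. -/
theorem stmt_2 (M : ℕ → ℝ) (hpos : ∀ j, 0 < M j) (h0 : M 0 = 1)
    (hmono : Monotone M) (hratio : Monotone fun j => M (j + 1) / M j)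
    (hmod : ∃ A : ℝ, 0 < A ∧ ∀ j k : ℕ, M (j + k) ≤ A ^ (j + k) * M j * M k)
    (hM : ℝ → ℝ) (hhM : ∀ t : ℝ, 0 ≤ t → hM t = sInf {y : ℝ | ∃ j : ℕ, y = t ^ j * M j}) :
    ∃ B : ℝ, 0 < B ∧ ∀ t : ℝ, 0 ≤ t → hM t ≤ (hM (B * t)) ^ 2 :=
  stmt_2_general M hpos hmod hM hhM
end

section
/- For the Gevrey sequence M_j = (j!)^α with α > 0, there exist positive constants a, b such that exp(-(a t)^{-1/α}) ≤ h_M(t) ≤ exp(-(b t)^{-1/α}) for all sufficiently small t > 0, where h_M(t) = inf_j t^j M_j. -/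
open Real

-- n^n ≤ e^n * n!
lemma aux_pow_le_exp_mul_factorial (n : ℕ) :
    (n : ℝ) ^ n ≤ Real.exp n * n.factorial := by
  have h1 : (n : ℝ) ^ n / n.factorial ≤ Real.exp n := by
    calc (n : ℝ) ^ n / n.factorial
        ≤ ∑ i ∈ Finset.range (n+1), (n : ℝ) ^ i / i.factorial := by
          refine Finset.single_le_sum (f := fun i => (n:ℝ)^i / i.factorial) ?_ ?_
          · intro i _
            positivity
          · exact Finset.self_mem_range_succ n
      _ ≤ Real.exp n := Real.sum_le_exp_of_nonneg (by positivity) _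
  have hf : (0:ℝ) < n.factorial := by positivity
  calc (n:ℝ)^n = (n:ℝ)^n / n.factorial * n.factorial := by field_simp
    _ ≤ Real.exp n * n.factorial := by
        exact mul_le_mul_of_nonneg_right h1 hf.le

-- lower bound
lemma aux_low (s : ℝ) (hs : 0 < s) (j : ℕ) :
    Real.exp (-(Real.exp 1 / s)) ≤ s ^ j * j.factorial := by
  rcases Nat.eq_zero_or_pos j with h0 | hj
  · subst h0
    simp only [pow_zero, Nat.factorial_zero, Nat.cast_one, mul_one]
    have h : (0:ℝ) < Real.exp 1 / s := by positivity
    exact Real.exp_le_one_iff.mpr (by linarith)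
  · have hjR : (0:ℝ) < j := by exact_mod_cast hj
    set x : ℝ := s * j / Real.exp 1 with hx
    have hxpos : 0 < x := by positivity
    have key : Real.exp (-(Real.exp 1 / s)) ≤ x ^ j := by
      rw [← Real.exp_log (pow_pos hxpos j), Real.exp_le_exp, Real.log_pow]
      have hlog : -x⁻¹ ≤ Real.log x := by
        have := Real.log_le_sub_one_of_pos (inv_pos.2 hxpos)
        have h2 : Real.log x⁻¹ ≤ x⁻¹ := this.trans (by linarith)
        rw [Real.log_inv] at h2
        linarith
      calc -(Real.exp 1 / s) = (j:ℝ) * (-x⁻¹) := by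
            rw [hx]; field_simp
        _ ≤ (j:ℝ) * Real.log x := by
            exact mul_le_mul_of_nonneg_left hlog (by positivity)
    have hfac : x ^ j ≤ s ^ j * j.factorial := by
      have h1 : x ^ j = s ^ j * ((j:ℝ)^j / (Real.exp 1)^j) := by
        rw [hx, div_pow, mul_pow]; ring
      rw [h1]
      refine mul_le_mul_of_nonneg_left ?_ (by positivity)
      rw [div_le_iff₀ (by positivity)]
      have hexp : Real.exp (j:ℝ) = Real.exp 1 ^ j := by
        rw [← Real.exp_nat_mul]; norm_num
      calc (j:ℝ)^j ≤ Real.exp j * j.factorial := aux_pow_le_exp_mul_factorial j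
        _ = (j.factorial:ℝ) * Real.exp 1 ^ j := by rw [hexp]; ring
    exact key.trans hfac

-- upper bound
lemma aux_up (s : ℝ) (hs : 0 < s) (hs4 : s ≤ 1/4) :
    ∃ j : ℕ, s ^ j * j.factorial ≤ Real.exp (-(Real.log (4/3) / 2 / s)) := by
  refine ⟨⌈1/(2*s)⌉₊, ?_⟩
  set j := ⌈1/(2*s)⌉₊ with hj
  have hjl : 1/(2*s) ≤ (j:ℝ) := Nat.le_ceil _
  have hju : (j:ℝ) < 1/(2*s) + 1 := Nat.ceil_lt_add_one (by positivity)
  have hsj : s * j ≤ 3/4 := by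
    have : s * j < s * (1/(2*s) + 1) := by
      exact mul_lt_mul_of_pos_left hju hs
    have h2 : s * (1/(2*s) + 1) = 1/2 + s := by field_simp
    nlinarith
  have h1 : s ^ j * j.factorial ≤ (s*j)^j := by
    rw [mul_pow]
    refine mul_le_mul_of_nonneg_left ?_ (by positivity)
    calc ((j.factorial : ℝ)) ≤ ((j^j : ℕ) : ℝ) := by
          exact_mod_cast Nat.factorial_le_pow j
      _ = (j:ℝ)^j := by push_cast; ring
  have h2 : (s*j)^j ≤ (3/4:ℝ)^j := by
    exact pow_le_pow_left₀ (by positivity) hsj j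
  have h3 : (3/4:ℝ)^j ≤ Real.exp (-(Real.log (4/3) / 2 / s)) := by
    have he : (3/4:ℝ)^j = Real.exp ((j:ℝ) * Real.log (3/4)) := by
      rw [Real.exp_nat_mul, Real.exp_log (by norm_num)]
    rw [he, Real.exp_le_exp]
    have hlog : Real.log (3/4 : ℝ) = -Real.log (4/3) := by
      rw [← Real.log_inv]; norm_num
    have hlogpos : 0 < Real.log (4/3 : ℝ) := Real.log_pos (by norm_num)
    rw [hlog]
    calc (j:ℝ) * -Real.log (4/3) = -(Real.log (4/3)) * j := by ring
      _ ≤ -(Real.log (4/3)) * (1/(2*s)) := by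
          apply mul_le_mul_of_nonpos_left hjl (by linarith)
      _ = -(Real.log (4/3) / 2 / s) := by field_simp
  exact h1.trans (h2.trans h3)

/-- For the Gevrey sequence `M j = (j!)^α` with `α > 0`, there are constants
`a, b > 0` with `exp (-(a*t)^(-1/α)) ≤ h_M t ≤ exp (-(b*t)^(-1/α))` for all
sufficiently small `t > 0`. -/
theorem stmt_3 (α : ℝ) (hα : 0 < α)
    (M : ℕ → ℝ) (hMdef : ∀ j : ℕ, M j = (j.factorial : ℝ) ^ α)
    (hM : ℝ → ℝ) (hhM : ∀ t : ℝ, 0 < t → hM t = sInf {y : ℝ | ∃ j : ℕ, y = t ^ j * M j}) :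
    ∃ a b : ℝ, 0 < a ∧ 0 < b ∧ ∃ ε : ℝ, 0 < ε ∧ ∀ t : ℝ, 0 < t → t < ε →
      Real.exp (-(a * t) ^ (-(1 / α))) ≤ hM t ∧ hM t ≤ Real.exp (-(b * t) ^ (-(1 / α))) := by
  have hαne : α ≠ 0 := hα.ne'
  set c₁ : ℝ := α * Real.exp 1 with hc₁
  set c₂ : ℝ := Real.log (4/3) / 2 * α with hc₂
  have hc₁pos : 0 < c₁ := by positivity
  have hc₂pos : 0 < c₂ := by
    have : 0 < Real.log (4/3 : ℝ) := Real.log_pos (by norm_num)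
    positivity
  refine ⟨c₁ ^ (-α), c₂ ^ (-α), Real.rpow_pos_of_pos hc₁pos _,
    Real.rpow_pos_of_pos hc₂pos _, (1/4 : ℝ) ^ α, Real.rpow_pos_of_pos (by norm_num) _,
    fun t ht htε => ?_⟩
  set s : ℝ := t ^ (1/α) with hsdef
  have hspos : 0 < s := Real.rpow_pos_of_pos ht _
  -- key rpow computation
  have comp : ∀ c : ℝ, 0 < c → (c ^ (-α) * t) ^ (-(1/α)) = c / s := by
    intro c hc
    rw [Real.mul_rpow (by positivity) ht.le, ← Real.rpow_mul hc.le]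
    have : -α * -(1/α) = 1 := by field_simp
    rw [this, Real.rpow_one, Real.rpow_neg ht.le, hsdef]
    simp [div_eq_mul_inv]
  -- elements of the set
  have elem_eq : ∀ j : ℕ, t ^ j * M j = (s ^ j * j.factorial) ^ α := by
    intro j
    rw [hMdef, Real.mul_rpow (by positivity) (by positivity)]
    congr 1
    rw [hsdef, ← Real.rpow_natCast (t ^ (1/α)) j, ← Real.rpow_natCast t j,
      ← Real.rpow_mul ht.le, ← Real.rpow_mul ht.le]
    congr 1
    field_simp
  -- lower bound for every element
  have hlow : ∀ y ∈ {y : ℝ | ∃ j : ℕ, y = t ^ j * M j}, Real.exp (-(c₁ / s)) ≤ y := by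
    rintro y ⟨j, rfl⟩
    rw [elem_eq]
    have := aux_low s hspos j
    calc Real.exp (-(c₁ / s)) = (Real.exp (-(Real.exp 1 / s))) ^ α := by
          rw [← Real.exp_mul]; congr 1; rw [hc₁]; ring
      _ ≤ (s ^ j * j.factorial) ^ α :=
          Real.rpow_le_rpow (Real.exp_pos _).le this hα.le
  have hne : {y : ℝ | ∃ j : ℕ, y = t ^ j * M j}.Nonempty := ⟨t ^ 0 * M 0, 0, rfl⟩
  have hbdd : BddBelow {y : ℝ | ∃ j : ℕ, y = t ^ j * M j} := ⟨_, hlow⟩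
  rw [hhM t ht]
  have hs4 : s ≤ 1/4 := by
    rw [hsdef]
    have : t ^ (1/α) ≤ ((1/4:ℝ)^α) ^ (1/α) :=
      Real.rpow_le_rpow ht.le htε.le (by positivity)
    rwa [← Real.rpow_mul (by norm_num), mul_one_div, div_self hαne, Real.rpow_one] at this
  constructor
  · -- lower
    rw [comp _ hc₁pos]
    exact le_csInf hne hlow
  · -- upper
    rw [comp _ hc₂pos]
    obtain ⟨j, hjle⟩ := aux_up s hspos hs4
    have hmem : t ^ j * M j ∈ {y : ℝ | ∃ j : ℕ, y = t ^ j * M j} := ⟨j, rfl⟩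
    refine (csInf_le hbdd hmem).trans ?_
    rw [elem_eq]
    calc (s ^ j * j.factorial) ^ α
        ≤ (Real.exp (-(Real.log (4/3) / 2 / s))) ^ α :=
          Real.rpow_le_rpow (by positivity) hjle hα.le
      _ = Real.exp (-(c₂ / s)) := by
          rw [← Real.exp_mul]; congr 1; rw [hc₂]; ring
end

section
/- The sequence M_j = (j!)^α (log(e + j))^{β j}, with α > 0 and β ≥ 0, is tame: it is increasing with M_0 = 1, the ratio sequence M_{j+1}/M_j is increasing, and there is A > 0 with M_{j+k} ≤ A^{j+k} M_j M_k for all j, k. -/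
open Real Set

noncomputable def stmt4_g : ℝ → ℝ := fun x => x * Real.log (Real.log (Real.exp 1 + x))

lemma stmt4_exp_one_ge : (2:ℝ) ≤ Real.exp 1 := by
  have := Real.add_one_le_exp 1; linarith

lemma stmt4_epx_pos {x : ℝ} (hx : 0 ≤ x) : 0 < Real.exp 1 + x := by
  have := Real.exp_pos 1; linarith

lemma stmt4_L_ge_one {x : ℝ} (hx : 0 ≤ x) : 1 ≤ Real.log (Real.exp 1 + x) := by
  have := Real.log_le_log (Real.exp_pos 1) (by linarith : Real.exp 1 ≤ Real.exp 1 + x)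
  rwa [Real.log_exp] at this

lemma stmt4_L_pos {x : ℝ} (hx : 0 ≤ x) : 0 < Real.log (Real.exp 1 + x) :=
  lt_of_lt_of_le one_pos (stmt4_L_ge_one hx)

noncomputable def stmt4_g' : ℝ → ℝ := fun x =>
  Real.log (Real.log (Real.exp 1 + x)) + x / ((Real.exp 1 + x) * Real.log (Real.exp 1 + x))

noncomputable def stmt4_g'' : ℝ → ℝ := fun x =>
  (1 / (Real.exp 1 + x)) / Real.log (Real.exp 1 + x) +
    (1 * ((Real.exp 1 + x) * Real.log (Real.exp 1 + x)) -
      x * (1 * Real.log (Real.exp 1 + x) + (Real.exp 1 + x) * (1 / (Real.exp 1 + x)))) /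
      ((Real.exp 1 + x) * Real.log (Real.exp 1 + x)) ^ 2

lemma stmt4_hasDeriv_L {x : ℝ} (hx : 0 ≤ x) :
    HasDerivAt (fun y : ℝ => Real.log (Real.exp 1 + y)) (1 / (Real.exp 1 + x)) x := by
  have h1 : HasDerivAt (fun y : ℝ => Real.exp 1 + y) 1 x := (hasDerivAt_id x).const_add _
  simpa using h1.log (ne_of_gt (stmt4_epx_pos hx))

lemma stmt4_hasDeriv_a {x : ℝ} (hx : 0 ≤ x) :
    HasDerivAt (fun y : ℝ => Real.log (Real.log (Real.exp 1 + y)))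
      ((1 / (Real.exp 1 + x)) / Real.log (Real.exp 1 + x)) x :=
  (stmt4_hasDeriv_L hx).log (ne_of_gt (stmt4_L_pos hx))

lemma stmt4_hasDeriv_g {x : ℝ} (hx : 0 ≤ x) : HasDerivAt stmt4_g (stmt4_g' x) x := by
  have h := (hasDerivAt_id x).mul (stmt4_hasDeriv_a hx)
  have hd : (0:ℝ) < Real.exp 1 + x := stmt4_epx_pos hx
  have hL : (0:ℝ) < Real.log (Real.exp 1 + x) := stmt4_L_pos hx
  refine h.congr_deriv ?_
  unfold stmt4_g'
  simp only [id]
  field_simp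

lemma stmt4_hasDeriv_d {x : ℝ} (hx : 0 ≤ x) :
    HasDerivAt (fun y : ℝ => (Real.exp 1 + y) * Real.log (Real.exp 1 + y))
      (1 * Real.log (Real.exp 1 + x) + (Real.exp 1 + x) * (1 / (Real.exp 1 + x))) x :=
  ((hasDerivAt_id x).const_add _).mul (stmt4_hasDeriv_L hx)

lemma stmt4_hasDeriv_g' {x : ℝ} (hx : 0 ≤ x) : HasDerivAt stmt4_g' (stmt4_g'' x) x := by
  have hd : (0:ℝ) < Real.exp 1 + x := stmt4_epx_pos hx
  have hL : (0:ℝ) < Real.log (Real.exp 1 + x) := stmt4_L_pos hx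
  have h2 : HasDerivAt (fun y : ℝ => y / ((Real.exp 1 + y) * Real.log (Real.exp 1 + y)))
      ((1 * ((Real.exp 1 + x) * Real.log (Real.exp 1 + x)) -
        x * (1 * Real.log (Real.exp 1 + x) + (Real.exp 1 + x) * (1 / (Real.exp 1 + x)))) /
        ((Real.exp 1 + x) * Real.log (Real.exp 1 + x)) ^ 2) x :=
    (hasDerivAt_id x).div (stmt4_hasDeriv_d hx) (by positivity)
  exact (stmt4_hasDeriv_a hx).add h2

lemma stmt4_g''_nonneg {x : ℝ} (hx : 0 ≤ x) : 0 ≤ stmt4_g'' x := by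
  have hd : (0:ℝ) < Real.exp 1 + x := stmt4_epx_pos hx
  have hL : (1:ℝ) ≤ Real.log (Real.exp 1 + x) := stmt4_L_ge_one hx
  unfold stmt4_g''
  set L := Real.log (Real.exp 1 + x)
  have key : (1 / (Real.exp 1 + x)) / L +
      (1 * ((Real.exp 1 + x) * L) - x * (1 * L + (Real.exp 1 + x) * (1 / (Real.exp 1 + x)))) /
      ((Real.exp 1 + x) * L) ^ 2
      = (2 * ((Real.exp 1 + x) * L) - x * L - x) / ((Real.exp 1 + x) * L) ^ 2 := by
    field_simp
    ring
  rw [key]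
  apply div_nonneg _ (by positivity)
  have he : (0:ℝ) < Real.exp 1 := Real.exp_pos 1
  nlinarith [mul_le_mul_of_nonneg_left hL hd.le, mul_nonneg he.le (le_trans zero_le_one hL)]

lemma stmt4_g_convex : ConvexOn ℝ (Set.Ici (0:ℝ)) stmt4_g := by
  apply convexOn_of_hasDerivWithinAt2_nonneg (convex_Ici 0) (f' := stmt4_g') (f'' := stmt4_g'')
  · apply ContinuousOn.mul continuousOn_id
    apply ContinuousOn.log
    apply ContinuousOn.log
    · exact (continuous_const.add continuous_id).continuousOn
    · intro x hx; exact ne_of_gt (stmt4_epx_pos hx)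
    · intro x hx; exact ne_of_gt (stmt4_L_pos hx)
  · rw [interior_Ici]
    intro x hx
    exact (stmt4_hasDeriv_g (le_of_lt hx)).hasDerivWithinAt
  · rw [interior_Ici]
    intro x hx
    exact (stmt4_hasDeriv_g' (le_of_lt hx)).hasDerivWithinAt
  · rw [interior_Ici]
    intro x hx
    exact stmt4_g''_nonneg (le_of_lt hx)

lemma stmt4_g_discrete (x : ℝ) (hx : 0 ≤ x) :
    2 * stmt4_g (x + 1) ≤ stmt4_g x + stmt4_g (x + 2) := by
  have h := stmt4_g_convex.2 (mem_Ici.2 hx)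
    (mem_Ici.2 (by linarith : (0:ℝ) ≤ x + 2))
    (by norm_num : (0:ℝ) ≤ 1/2) (by norm_num : (0:ℝ) ≤ 1/2) (by norm_num)
  have e : (1/2 : ℝ) • x + (1/2 : ℝ) • (x + 2) = x + 1 := by
    simp [smul_eq_mul]; ring
  rw [e] at h
  simp only [smul_eq_mul] at h
  linarith

/-- Binomial-type bound for factorials. -/
lemma stmt4_fact_le (j k : ℕ) : ((j + k).factorial : ℝ) ≤
    2 ^ (j + k) * (j.factorial * k.factorial) := by
  have h1 : (j + k).choose k * j.factorial * k.factorial = (j + k).factorial :=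
    Nat.add_choose_mul_factorial_mul_factorial j k
  have h2 : (j + k).choose k ≤ 2 ^ (j + k) := by
    rw [← Nat.sum_range_choose (j + k)]
    exact Finset.single_le_sum (fun i _ => Nat.zero_le _)
      (Finset.mem_range.2 (by omega))
  have h3 : (j + k).factorial ≤ 2 ^ (j + k) * (j.factorial * k.factorial) := by
    calc (j + k).factorial = (j + k).choose k * j.factorial * k.factorial := h1.symm
    _ ≤ 2 ^ (j + k) * j.factorial * k.factorial := by
        exact Nat.mul_le_mul_right _ (Nat.mul_le_mul_right _ h2)
    _ = 2 ^ (j + k) * (j.factorial * k.factorial) := by ring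
  exact_mod_cast h3

/-- Log-factorial subadditivity up to `n log 2`. -/
lemma stmt4_fact_log (j k : ℕ) : Real.log ((j + k).factorial : ℝ) ≤
    (j + k : ℕ) * Real.log 2 + Real.log (j.factorial : ℝ) + Real.log (k.factorial : ℝ) := by
  have hpos : (0:ℝ) < ((j + k).factorial : ℝ) := by exact_mod_cast (j + k).factorial_pos
  have h := Real.log_le_log hpos (stmt4_fact_le j k)
  have hj : (0:ℝ) < (j.factorial : ℝ) := by exact_mod_cast j.factorial_pos
  have hk : (0:ℝ) < (k.factorial : ℝ) := by exact_mod_cast k.factorial_pos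
  rw [Real.log_mul (by positivity) (by positivity), Real.log_mul (ne_of_gt hj) (ne_of_gt hk),
    Real.log_pow] at h
  push_cast at h ⊢
  linarith

/-- Key sub-multiplicativity for the log-log weight, assuming `j ≤ k`. -/
lemma stmt4_loglog (j k : ℕ) (hjk : j ≤ k) :
    ((j:ℝ) + k) * Real.log (Real.log (Real.exp 1 + ((j:ℝ) + k))) ≤
      ((j:ℝ) + k) * (Real.log 2 + 1) +
        (j:ℝ) * Real.log (Real.log (Real.exp 1 + j)) +
        (k:ℝ) * Real.log (Real.log (Real.exp 1 + k)) := by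
  have he : (2:ℝ) ≤ Real.exp 1 := stmt4_exp_one_ge
  have hj0 : (0:ℝ) ≤ (j:ℝ) := Nat.cast_nonneg j
  have hk0 : (0:ℝ) ≤ (k:ℝ) := Nat.cast_nonneg k
  have hjk' : (j:ℝ) ≤ (k:ℝ) := by exact_mod_cast hjk
  set u : ℝ := Real.exp 1 + j with hu
  set v : ℝ := Real.exp 1 + k with hv
  set w : ℝ := Real.exp 1 + ((j:ℝ) + k) with hw
  have hu1 : (1:ℝ) < u := by simp only [hu]; nlinarith
  have hv1 : (1:ℝ) < v := by simp only [hv]; nlinarith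
  have hw1 : (1:ℝ) < w := by simp only [hw]; nlinarith
  have hLu1 : 1 ≤ Real.log u := stmt4_L_ge_one hj0
  have hLv1 : 1 ≤ Real.log v := stmt4_L_ge_one hk0
  have hLw0 : 0 < Real.log w := stmt4_L_pos (by positivity)
  have hLu0 : 0 < Real.log u := by linarith
  have hLv0 : 0 < Real.log v := by linarith
  -- step 1 : log w ≤ 2 log v
  have s1 : Real.log w ≤ 2 * Real.log v := by
    have hle : w ≤ v ^ 2 := by
      simp only [hu, hv, hw]
      nlinarith
    have := Real.log_le_log (by linarith) hle
    rwa [Real.log_pow, Nat.cast_ofNat] at this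
  -- step 2 : loglog w ≤ log 2 + loglog v
  have s2 : Real.log (Real.log w) ≤ Real.log 2 + Real.log (Real.log v) := by
    have := Real.log_le_log hLw0 (by linarith : Real.log w ≤ 2 * Real.log v)
    rwa [Real.log_mul (by norm_num) (ne_of_gt hLv0)] at this
  -- step 3 : log v - log u ≤ (k - j)/u
  have s3 : Real.log v - Real.log u ≤ ((k:ℝ) - j) / u := by
    have h1 : Real.log v - Real.log u = Real.log (v / u) :=
      (Real.log_div (by linarith) (by linarith)).symm
    have h2 : Real.log (v / u) ≤ v / u - 1 :=
      Real.log_le_sub_one_of_pos (by positivity)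
    have h3 : v / u - 1 = ((k:ℝ) - j) / u := by
      field_simp
      simp only [hu, hv]
      ring
    rw [h1]
    rw [h3] at h2
    exact h2
  -- step 4 : loglog v - loglog u ≤ log v - log u
  have s4 : Real.log (Real.log v) - Real.log (Real.log u) ≤ Real.log v - Real.log u := by
    have h1 : Real.log (Real.log v) - Real.log (Real.log u) = Real.log (Real.log v / Real.log u) :=
      (Real.log_div (ne_of_gt hLv0) (ne_of_gt hLu0)).symm
    have h2 : Real.log (Real.log v / Real.log u) ≤ Real.log v / Real.log u - 1 :=
      Real.log_le_sub_one_of_pos (by positivity)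
    have hLvu : Real.log u ≤ Real.log v :=
      Real.log_le_log (by linarith) (by simp only [hu, hv]; linarith)
    have h3 : Real.log v / Real.log u - 1 = (Real.log v - Real.log u) / Real.log u := by
      field_simp
    have h4 : (Real.log v - Real.log u) / Real.log u ≤ Real.log v - Real.log u := by
      apply div_le_self (by linarith) hLu1
    rw [h1]
    linarith
  -- step 5 : j * (loglog v - loglog u) ≤ k - j
  have s5 : (j:ℝ) * (Real.log (Real.log v) - Real.log (Real.log u)) ≤ (k:ℝ) - j := by
    have h1 : (j:ℝ) * (Real.log (Real.log v) - Real.log (Real.log u)) ≤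
        (j:ℝ) * (((k:ℝ) - j) / u) :=
      mul_le_mul_of_nonneg_left (by linarith) hj0
    have h2 : (j:ℝ) * (((k:ℝ) - j) / u) ≤ ((k:ℝ) - j) * 1 := by
      have hju : (j:ℝ) / u ≤ 1 := by
        rw [div_le_one (by linarith)]
        simp only [hu]; linarith
      have : (j:ℝ) * (((k:ℝ) - j) / u) = ((k:ℝ) - j) * ((j:ℝ) / u) := by ring
      rw [this]
      exact mul_le_mul_of_nonneg_left hju (by linarith)
    linarith
  -- combine
  have main : ((j:ℝ) + k) * Real.log (Real.log w) ≤
      ((j:ℝ) + k) * (Real.log 2 + Real.log (Real.log v)) :=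
    mul_le_mul_of_nonneg_left s2 (by positivity)
  have hau : 0 ≤ Real.log (Real.log u) := Real.log_nonneg hLu1
  have hav : 0 ≤ Real.log (Real.log v) := Real.log_nonneg hLv1
  nlinarith [main, s5]

/-- The sequence `M j = (j!)^α * (log (e + j))^(β * j)`, with `α > 0`, `β ≥ 0`, is tame:
normalized (`M 0 = 1`), increasing, log-convex (increasing ratios), and of moderate growth. -/
theorem stmt_4 (α β : ℝ) (hα : 0 < α) (hβ : 0 ≤ β)
    (M : ℕ → ℝ)
    (hMdef : ∀ j : ℕ, M j = (j.factorial : ℝ) ^ α * (Real.log (Real.exp 1 + j)) ^ (β * j)) :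
    M 0 = 1 ∧ Monotone M ∧ (Monotone fun j => M (j + 1) / M j) ∧
      ∃ A : ℝ, 0 < A ∧ ∀ j k : ℕ, M (j + k) ≤ A ^ (j + k) * M j * M k := by
  -- the log of M
  set F : ℕ → ℝ := fun j =>
    Real.log (j.factorial : ℝ) * α + Real.log (Real.log (Real.exp 1 + j)) * (β * j) with hF
  have hfactpos : ∀ j : ℕ, (0:ℝ) < (j.factorial : ℝ) := fun j => by
    exact_mod_cast j.factorial_pos
  have hLpos : ∀ j : ℕ, (0:ℝ) < Real.log (Real.exp 1 + j) :=
    fun j => stmt4_L_pos (Nat.cast_nonneg j)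
  have hM : ∀ j : ℕ, M j = Real.exp (F j) := by
    intro j
    rw [hMdef j, Real.rpow_def_of_pos (hfactpos j), Real.rpow_def_of_pos (hLpos j),
      ← Real.exp_add]
  -- basic monotonicity facts
  have hlogfact_nonneg : ∀ j : ℕ, 0 ≤ Real.log (j.factorial : ℝ) := fun j =>
    Real.log_nonneg (by exact_mod_cast j.factorial_pos)
  have ha_nonneg : ∀ j : ℕ, 0 ≤ Real.log (Real.log (Real.exp 1 + j)) := fun j =>
    Real.log_nonneg (stmt4_L_ge_one (Nat.cast_nonneg j))
  have hlogfact_mono : ∀ j : ℕ, Real.log (j.factorial : ℝ) ≤ Real.log ((j+1).factorial : ℝ) :=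
    fun j => Real.log_le_log (hfactpos j)
      (by exact_mod_cast Nat.factorial_le (Nat.le_succ j))
  have ha_mono : ∀ j : ℕ, Real.log (Real.log (Real.exp 1 + j)) ≤
      Real.log (Real.log (Real.exp 1 + (j+1 : ℕ))) := by
    intro j
    apply Real.log_le_log (hLpos j)
    apply Real.log_le_log (stmt4_epx_pos (Nat.cast_nonneg j))
    push_cast
    linarith
  refine ⟨?_, ?_, ?_, ?_⟩
  · -- M 0 = 1
    rw [hMdef 0]
    simp [Real.one_rpow, Real.log_exp]
  · -- Monotone M
    apply monotone_nat_of_le_succ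
    intro j
    rw [hM j, hM (j+1)]
    apply Real.exp_le_exp.2
    simp only [hF]
    have h1 : Real.log (j.factorial : ℝ) * α ≤ Real.log ((j+1).factorial : ℝ) * α :=
      mul_le_mul_of_nonneg_right (hlogfact_mono j) hα.le
    have h2 : Real.log (Real.log (Real.exp 1 + j)) * (β * j) ≤
        Real.log (Real.log (Real.exp 1 + (j+1 : ℕ))) * (β * (j+1 : ℕ)) := by
      apply mul_le_mul (ha_mono j) _ (by positivity) (ha_nonneg (j+1))
      have : (j:ℝ) ≤ ((j+1 : ℕ):ℝ) := by push_cast; linarith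
      exact mul_le_mul_of_nonneg_left this hβ
    linarith
  · -- Monotone ratio
    apply monotone_nat_of_le_succ
    intro j
    have hMpos : ∀ i : ℕ, 0 < M i := fun i => by rw [hM i]; exact Real.exp_pos _
    rw [hM j, hM (j+1), hM (j+2), ← Real.exp_sub, ← Real.exp_sub]
    apply Real.exp_le_exp.2
    -- reduces to 2 F(j+1) ≤ F j + F (j+2)
    have hfact : 2 * Real.log ((j+1).factorial : ℝ) ≤
        Real.log (j.factorial : ℝ) + Real.log ((j+2).factorial : ℝ) := by
      have e1 : ((j+1).factorial : ℝ) = ((j:ℝ) + 1) * (j.factorial : ℝ) := by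
        rw [show j + 1 = j.succ from rfl, Nat.factorial_succ]; push_cast; ring
      have e2 : ((j+2).factorial : ℝ) = ((j:ℝ) + 2) * ((j+1).factorial : ℝ) := by
        rw [show j + 2 = (j+1).succ from rfl, Nat.factorial_succ]; push_cast; ring
      have l1 : Real.log ((j+1).factorial : ℝ) =
          Real.log ((j:ℝ) + 1) + Real.log (j.factorial : ℝ) := by
        rw [e1, Real.log_mul (by positivity) (ne_of_gt (hfactpos j))]
      have l2 : Real.log ((j+2).factorial : ℝ) =
          Real.log ((j:ℝ) + 2) + Real.log ((j+1).factorial : ℝ) := by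
        rw [e2, Real.log_mul (by positivity) (ne_of_gt (hfactpos (j+1)))]
      have l3 : Real.log ((j:ℝ) + 1) ≤ Real.log ((j:ℝ) + 2) :=
        Real.log_le_log (by positivity) (by linarith)
      linarith
    have hg : 2 * stmt4_g ((j:ℝ) + 1) ≤ stmt4_g (j:ℝ) + stmt4_g ((j:ℝ) + 2) :=
      stmt4_g_discrete (j:ℝ) (Nat.cast_nonneg j)
    simp only [stmt4_g] at hg
    simp only [hF]
    push_cast
    nlinarith [mul_le_mul_of_nonneg_right hfact hα.le, mul_le_mul_of_nonneg_left hg hβ]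
  · -- moderate growth
    refine ⟨Real.exp (α * Real.log 2 + β * (Real.log 2 + 1)), Real.exp_pos _, ?_⟩
    intro j k
    have hA : Real.exp (α * Real.log 2 + β * (Real.log 2 + 1)) ^ (j + k) =
        Real.exp (((j + k : ℕ):ℝ) * (α * Real.log 2 + β * (Real.log 2 + 1))) := by
      rw [← Real.exp_nat_mul]
    rw [hM (j+k), hM j, hM k, hA, ← Real.exp_add, ← Real.exp_add]
    apply Real.exp_le_exp.2
    -- key inequalities
    have hfact := stmt4_fact_log j k
    have hll : ((j:ℝ) + k) * Real.log (Real.log (Real.exp 1 + ((j:ℝ) + k))) ≤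
        ((j:ℝ) + k) * (Real.log 2 + 1) +
          (j:ℝ) * Real.log (Real.log (Real.exp 1 + j)) +
          (k:ℝ) * Real.log (Real.log (Real.exp 1 + k)) := by
      rcases le_total j k with h | h
      · exact stmt4_loglog j k h
      · have := stmt4_loglog k j h
        rw [add_comm (k:ℝ) (j:ℝ)] at this
        linarith
    simp only [hF]
    push_cast
    push_cast at hfact
    nlinarith [mul_le_mul_of_nonneg_right hfact hα.le, mul_le_mul_of_nonneg_left hll hβ]
end

section
/- For real numbers μ > 1 and ν ≥ 0, the function θ(t) = t^μ · (log(1 + 1/t))^{-ν} (extended by θ(0) = 0) is admissible on a neighborhood of 0: it is continuous, increasing, θ(0) = 0, t ↦ θ(t)/t is increasing, and there exists s ≥ 1 such that t ↦ θ(t)/t^s is decreasing near 0. -/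
open Real Set

private lemma aux_L_pos {t : ℝ} (ht : 0 < t) : 0 < Real.log (1 + 1 / t) :=
  Real.log_pos (by
    have h : 0 < 1 / t := by positivity
    linarith)

private lemma aux_base_pos {t : ℝ} (ht : 0 < t) : (0:ℝ) < 1 + 1 / t := by
  have : 0 < 1 / t := by positivity
  linarith

private lemma aux_L_anti {a b : ℝ} (ha : 0 < a) (hab : a ≤ b) :
    Real.log (1 + 1 / b) ≤ Real.log (1 + 1 / a) := by
  have hb : 0 < b := lt_of_lt_of_le ha hab
  apply Real.log_le_log (aux_base_pos hb)
  have := one_div_le_one_div_of_le ha hab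
  linarith

private lemma aux_L_big {ν t : ℝ} (ht : 0 < t) (htε : t < Real.exp (-(ν + 1))) :
    ν + 1 < Real.log (1 + 1 / t) := by
  have h1 : Real.exp (ν + 1) < 1 / t := by
    rw [lt_div_iff₀ ht]
    calc Real.exp (ν + 1) * t < Real.exp (ν + 1) * Real.exp (-(ν + 1)) := by
          exact mul_lt_mul_of_pos_left htε (Real.exp_pos _)
      _ = Real.exp 0 := by rw [← Real.exp_add]; ring_nf
      _ = 1 := Real.exp_zero
  have h2 : Real.exp (ν + 1) < 1 + 1 / t := by linarith
  calc ν + 1 = Real.log (Real.exp (ν + 1)) := (Real.log_exp _).symm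
    _ < Real.log (1 + 1 / t) := Real.log_lt_log (Real.exp_pos _) h2

/-- monotonicity of `t^p * (log (1+1/t))^(-ν)` for `p ≥ 0`, `ν ≥ 0`. -/
private lemma aux_mono {p ν a b : ℝ} (hp : 0 ≤ p) (hν : 0 ≤ ν)
    (ha : 0 < a) (hab : a ≤ b) :
    a ^ p * (Real.log (1 + 1 / a)) ^ (-ν) ≤ b ^ p * (Real.log (1 + 1 / b)) ^ (-ν) := by
  have hb : 0 < b := lt_of_lt_of_le ha hab
  have h1 : a ^ p ≤ b ^ p := Real.rpow_le_rpow ha.le hab hp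
  have h2 : (Real.log (1 + 1 / a)) ^ (-ν) ≤ (Real.log (1 + 1 / b)) ^ (-ν) :=
    Real.rpow_le_rpow_of_nonpos (aux_L_pos hb) (aux_L_anti ha hab) (neg_nonpos.mpr hν)
  have h3 : (0:ℝ) ≤ (Real.log (1 + 1 / a)) ^ (-ν) := Real.rpow_nonneg (aux_L_pos ha).le _
  exact mul_le_mul h1 h2 h3 (Real.rpow_nonneg hb.le _)

/-- For `μ > 1` and `ν ≥ 0`, the function `θ t = t^μ * (log (1 + 1/t))^(-ν)` (with
`θ 0 = 0`) is admissible near `0`: continuous, increasing, vanishing at `0`, with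
`θ t / t` increasing, and `θ t / t^s` decreasing for some `s ≥ 1`. -/
theorem stmt_5 (μ ν : ℝ) (hμ : 1 < μ) (hν : 0 ≤ ν)
    (θ : ℝ → ℝ) (hθ0 : θ 0 = 0)
    (hθdef : ∀ t : ℝ, 0 < t → θ t = t ^ μ * (Real.log (1 + 1 / t)) ^ (-ν)) :
    ∃ ε : ℝ, 0 < ε ∧
      ContinuousOn θ (Set.Ico 0 ε) ∧
      MonotoneOn θ (Set.Ico 0 ε) ∧
      MonotoneOn (fun t => θ t / t) (Set.Ioo 0 ε) ∧
      ∃ s : ℝ, 1 ≤ s ∧ AntitoneOn (fun t => θ t / t ^ s) (Set.Ioo 0 ε) := by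
  set ε : ℝ := Real.exp (-(ν + 1)) with hε
  have hεpos : 0 < ε := Real.exp_pos _
  -- nonnegativity of θ on [0, ε)
  have hθnonneg : ∀ t : ℝ, 0 ≤ t → 0 ≤ θ t := by
    intro t ht
    rcases eq_or_lt_of_le ht with h | h
    · rw [← h, hθ0]
    · rw [hθdef t h]
      exact mul_nonneg (Real.rpow_nonneg h.le _) (Real.rpow_nonneg (aux_L_pos h).le _)
  -- bound θ t ≤ t ^ μ on (0, ε)
  have hθle : ∀ t : ℝ, 0 < t → t < ε → θ t ≤ t ^ μ := by
    intro t ht htε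
    rw [hθdef t ht]
    have hL1 : (1:ℝ) ≤ Real.log (1 + 1 / t) := by
      have := aux_L_big (ν := ν) ht htε; linarith
    have : (Real.log (1 + 1 / t)) ^ (-ν) ≤ 1 := by
      calc (Real.log (1 + 1 / t)) ^ (-ν) ≤ (1:ℝ) ^ (-ν) :=
            Real.rpow_le_rpow_of_nonpos one_pos hL1 (neg_nonpos.mpr hν)
        _ = 1 := Real.one_rpow _
    calc t ^ μ * (Real.log (1 + 1 / t)) ^ (-ν) ≤ t ^ μ * 1 :=
          mul_le_mul_of_nonneg_left this (Real.rpow_nonneg ht.le _)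
      _ = t ^ μ := mul_one _
  refine ⟨ε, hεpos, ?_, ?_, ?_, ?_⟩
  · -- continuity
    intro x hx
    rcases eq_or_lt_of_le hx.1 with h0 | h0
    · -- at 0 : squeeze
      rw [← h0]
      rw [ContinuousWithinAt, hθ0]
      have htend : Filter.Tendsto (fun t : ℝ => t ^ μ) (nhdsWithin 0 (Set.Ico 0 ε)) (nhds 0) := by
        have hc : ContinuousAt (fun t : ℝ => t ^ μ) 0 :=
          Real.continuousAt_rpow_const 0 μ (Or.inr (by linarith))
        have h2 : Filter.Tendsto (fun t : ℝ => t ^ μ) (nhdsWithin 0 (Set.Ico 0 ε))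
            (nhds ((0:ℝ) ^ μ)) := hc.continuousWithinAt
        rwa [Real.zero_rpow (by linarith : μ ≠ 0)] at h2
      apply squeeze_zero' ?_ ?_ htend
      · filter_upwards [self_mem_nhdsWithin] with t ht
        exact hθnonneg t ht.1
      · filter_upwards [self_mem_nhdsWithin] with t ht
        rcases eq_or_lt_of_le ht.1 with h | h
        · rw [← h, hθ0, Real.zero_rpow (by linarith : μ ≠ 0)]
        · exact hθle t h ht.2
    · -- at x > 0
      have hx0 : (0:ℝ) < x := h0
      have hLx : 0 < Real.log (1 + 1 / x) := aux_L_pos hx0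
      have hca : ContinuousAt (fun t : ℝ => t ^ μ * (Real.log (1 + 1 / t)) ^ (-ν)) x := by
        apply ContinuousAt.mul
        · exact Real.continuousAt_rpow_const x μ (Or.inl hx0.ne')
        · have hlog : ContinuousAt (fun t : ℝ => Real.log (1 + 1 / t)) x :=
            ContinuousAt.log
              (continuousAt_const.add (continuousAt_const.div continuousAt_id hx0.ne'))
              (aux_base_pos hx0).ne'
          exact hlog.rpow_const (Or.inl hLx.ne')
      have heq : θ =ᶠ[nhds x] fun t => t ^ μ * (Real.log (1 + 1 / t)) ^ (-ν) := by
        filter_upwards [eventually_gt_nhds hx0] with t ht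
        exact hθdef t ht
      exact (hca.congr heq.symm).continuousWithinAt
  · -- θ monotone
    intro a ha b hb hab
    rcases eq_or_lt_of_le ha.1 with h | h
    · rw [← h, hθ0]; exact hθnonneg b hb.1
    · rw [hθdef a h, hθdef b (lt_of_lt_of_le h hab)]
      exact aux_mono (by linarith) hν h hab
  · -- θ t / t monotone
    intro a ha b hb hab
    have ha0 := ha.1
    have hb0 := hb.1
    simp only
    rw [hθdef a ha0, hθdef b hb0]
    have hrw : ∀ t : ℝ, t ≠ 0 → ∀ c : ℝ, t ^ μ * c / t = t ^ (μ - 1) * c := by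
      intro t ht c
      rw [mul_div_right_comm, ← Real.rpow_sub_one ht]
    rw [hrw a ha0.ne', hrw b hb0.ne']
    exact aux_mono (by linarith) hν ha0 hab
  · -- the antitone part
    refine ⟨μ + 1, by linarith, ?_⟩
    -- g t = t * (log (1+1/t))^ν is strictly monotone on Ioo 0 ε
    set g : ℝ → ℝ := fun t => t * (Real.log (1 + 1 / t)) ^ ν with hg
    have hderiv : ∀ t ∈ Set.Ioo (0:ℝ) ε, ∃ d : ℝ, 0 < d ∧ HasDerivAt g d t := by
      intro t ht
      obtain ⟨ht0, htε⟩ := ht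
      have hLt : 0 < Real.log (1 + 1 / t) := aux_L_pos ht0
      set L : ℝ := Real.log (1 + 1 / t) with hLdef
      have h1 : HasDerivAt (fun x : ℝ => 1 + 1 / x) (-(t ^ 2)⁻¹) t := by
        simpa using (hasDerivAt_inv ht0.ne').const_add 1
      have h2 : HasDerivAt Real.log (1 + 1 / t)⁻¹ (1 + 1 / t) :=
        Real.hasDerivAt_log (aux_base_pos ht0).ne'
      have h3 : HasDerivAt (fun x : ℝ => Real.log (1 + 1 / x))
          ((1 + 1 / t)⁻¹ * -(t ^ 2)⁻¹) t := by have := h2.comp t h1; exact this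
      have h4 : HasDerivAt (fun y : ℝ => y ^ ν) (ν * L ^ (ν - 1)) L :=
        Real.hasDerivAt_rpow_const (Or.inl hLt.ne')
      have h5 : HasDerivAt (fun x : ℝ => (Real.log (1 + 1 / x)) ^ ν)
          (ν * L ^ (ν - 1) * ((1 + 1 / t)⁻¹ * -(t ^ 2)⁻¹)) t := by have := h4.comp t h3; exact this
      have h6 : HasDerivAt g
          (1 * L ^ ν + t * (ν * L ^ (ν - 1) * ((1 + 1 / t)⁻¹ * -(t ^ 2)⁻¹))) t :=
        (hasDerivAt_id t).mul h5
      refine ⟨_, ?_, h6⟩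
      -- show positivity of the derivative
      have hsimp : t * (ν * L ^ (ν - 1) * ((1 + 1 / t)⁻¹ * -(t ^ 2)⁻¹)) =
          -(ν * L ^ (ν - 1) / (t + 1)) := by
        have h7 : t * (1 + 1 / t) = t + 1 := by field_simp
        field_simp
      rw [hsimp]
      have hLν : L ^ ν = L ^ (ν - 1) * L := by
        rw [← Real.rpow_add_one hLt.ne' (ν - 1)]; ring_nf
      have hLbig : ν + 1 < L := aux_L_big ht0 htε
      have hfrac : ν * L ^ (ν - 1) / (t + 1) ≤ ν * L ^ (ν - 1) := by
        apply div_le_self (by positivity) (by linarith)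
      have hstep : ν * L ^ (ν - 1) < L ^ (ν - 1) * L := by
        have hLpow : 0 < L ^ (ν - 1) := Real.rpow_pos_of_pos hLt _
        calc ν * L ^ (ν - 1) < L * L ^ (ν - 1) := by
              apply mul_lt_mul_of_pos_right (by linarith) hLpow
          _ = L ^ (ν - 1) * L := mul_comm _ _
      rw [one_mul, hLν]
      linarith
    have hgmono : StrictMonoOn g (Set.Ioo 0 ε) := by
      apply strictMonoOn_of_deriv_pos (convex_Ioo 0 ε)
      · intro x hx
        obtain ⟨d, _, hd⟩ := hderiv x hx
        exact (hd.differentiableAt.continuousAt).continuousWithinAt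
      · intro x hx
        rw [interior_Ioo] at hx
        obtain ⟨d, hdpos, hd⟩ := hderiv x hx
        rw [hd.deriv]
        exact hdpos
    have hgpos : ∀ t ∈ Set.Ioo (0:ℝ) ε, 0 < g t := by
      intro t ht
      exact mul_pos ht.1 (Real.rpow_pos_of_pos (aux_L_pos ht.1) _)
    -- θ t / t^(μ+1) = (g t)⁻¹
    have hfeq : ∀ t ∈ Set.Ioo (0:ℝ) ε, θ t / t ^ (μ + 1) = (g t)⁻¹ := by
      intro t ht
      have ht0 := ht.1
      have hLt : 0 < Real.log (1 + 1 / t) := aux_L_pos ht0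
      rw [hθdef t ht0, hg]
      rw [Real.rpow_neg hLt.le]
      have : t ^ (μ + 1) = t ^ μ * t := by
        rw [← Real.rpow_add_one ht0.ne' μ]
      rw [this]
      have htμ : (t:ℝ) ^ μ ≠ 0 := (Real.rpow_pos_of_pos ht0 _).ne'
      have hLν : (Real.log (1 + 1 / t)) ^ ν ≠ 0 := (Real.rpow_pos_of_pos hLt _).ne'
      have key : ∀ P c : ℝ, P ≠ 0 → c ≠ 0 → P * c⁻¹ / (P * t) = (t * c)⁻¹ := by
        intro P c hP hc
        field_simp
      exact key _ _ htμ hLν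
    intro a ha b hb hab
    simp only
    rw [hfeq a ha, hfeq b hb]
    rcases eq_or_lt_of_le hab with h | h
    · rw [h]
    · exact (inv_anti₀ (hgpos a ha) (hgmono ha hb h).le)
end

section
/- Let M be a tame sequence and θ(t) = c t^s for constants c > 0 and s ≥ 1. Then the sequence M^{(θ)} defined by M^{(θ)}_j = (M_j)^s satisfies: there exist constants c', c'' > 0 such that h_M(c' t) ≤ h_{M^{(θ)}}(θ(t)) ≤ h_M(c'' t) for all sufficiently small t > 0. -/
open Real Set

private lemma stmt6_sInf_rpow {p : ℝ} (hp : 0 < p) {S : Set ℝ} (hne : S.Nonempty)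
    (hbdd : BddBelow S) (hS : ∀ x ∈ S, 0 ≤ x) :
    sInf ((fun x => x ^ p) '' S) = (sInf S) ^ p := by
  set f : ℝ → ℝ := fun x => (max x 0) ^ p with hf
  have hmono : Monotone f := fun x y h =>
    Real.rpow_le_rpow (le_max_right x 0) (max_le_max h le_rfl) hp.le
  have hcont : ContinuousAt f (sInf S) := by
    have h1 : ContinuousAt (fun x : ℝ => max x 0) (sInf S) :=
      (continuous_id.max continuous_const).continuousAt
    exact (Real.continuousAt_rpow_const _ p (Or.inr hp.le)).comp h1
  have h0 : 0 ≤ sInf S := le_csInf hne hS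
  have key := hmono.map_csInf_of_continuousAt hcont hne hbdd
  have himg : f '' S = (fun x => x ^ p) '' S :=
    Set.image_congr fun x hx => by simp [hf, max_eq_left (hS x hx)]
  rw [← himg, ← key, hf]
  simp [max_eq_left h0]

/-- For a tame sequence `M` and `θ t = c * t^s` (`c > 0`, `s ≥ 1`), the sequence
`M^(θ)_j = (M j)^s` satisfies `h_M (c' * t) ≤ h_{M^(θ)} (θ t) ≤ h_M (c'' * t)` for
suitable constants `c', c'' > 0` and all sufficiently small `t > 0`. -/
theorem stmt_6 (M : ℕ → ℝ) (hpos : ∀ j, 0 < M j) (h0 : M 0 = 1)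
    (hmono : Monotone M) (hratio : Monotone fun j => M (j + 1) / M j)
    (hmod : ∃ A : ℝ, 0 < A ∧ ∀ j k : ℕ, M (j + k) ≤ A ^ (j + k) * M j * M k)
    (c s : ℝ) (hc : 0 < c) (hs : 1 ≤ s)
    (θ : ℝ → ℝ) (hθ : ∀ t : ℝ, θ t = c * t ^ s)
    (N : ℕ → ℝ) (hN : ∀ j : ℕ, N j = (M j) ^ s)
    (hM hNfn : ℝ → ℝ)
    (hhM : ∀ t : ℝ, 0 ≤ t → hM t = sInf {y : ℝ | ∃ j : ℕ, y = t ^ j * M j})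
    (hhN : ∀ t : ℝ, 0 ≤ t → hNfn t = sInf {y : ℝ | ∃ j : ℕ, y = t ^ j * N j}) :
    ∃ c' c'' : ℝ, 0 < c' ∧ 0 < c'' ∧ ∃ ε : ℝ, 0 < ε ∧ ∀ t : ℝ, 0 < t → t < ε →
      hM (c' * t) ≤ hNfn (θ t) ∧ hNfn (θ t) ≤ hM (c'' * t) := by
  obtain ⟨A, hA, hmodA⟩ := hmod
  have hs0 : (0 : ℝ) < s := lt_of_lt_of_le one_pos hs
  set S : ℝ → Set ℝ := fun t => {y : ℝ | ∃ j : ℕ, y = t ^ j * M j} with hSdef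
  have hmem : ∀ t : ℝ, ∀ j : ℕ, t ^ j * M j ∈ S t := fun t j => ⟨j, rfl⟩
  have hne : ∀ t : ℝ, (S t).Nonempty := fun t => ⟨t ^ 0 * M 0, hmem t 0⟩
  have hSnn : ∀ t : ℝ, 0 ≤ t → ∀ x ∈ S t, 0 ≤ x := by
    rintro t ht x ⟨j, rfl⟩
    exact mul_nonneg (pow_nonneg ht j) (hpos j).le
  have hbdd : ∀ t : ℝ, 0 ≤ t → BddBelow (S t) := fun t ht => ⟨0, fun x hx => hSnn t ht x hx⟩
  set g : ℝ → ℝ := fun t => sInf (S t) with hgdef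
  have hg0 : ∀ t : ℝ, 0 ≤ t → 0 ≤ g t := fun t ht => le_csInf (hne t) (hSnn t ht)
  have hg1 : ∀ t : ℝ, 0 ≤ t → g t ≤ 1 := by
    intro t ht
    have : (1 : ℝ) ∈ S t := ⟨0, by simp [h0]⟩
    exact csInf_le (hbdd t ht) this
  have hgle : ∀ t : ℝ, 0 ≤ t → ∀ j : ℕ, g t ≤ t ^ j * M j := fun t ht j =>
    csInf_le (hbdd t ht) (hmem t j)
  -- key: g (t / A) ≤ g t * g t
  have keyA : ∀ t : ℝ, 0 ≤ t → g (t / A) ≤ g t * g t := by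
    intro t ht
    have hsq := stmt6_sInf_rpow (p := 2) two_pos (hne t) (hbdd t ht) (hSnn t ht)
    have hgt2 : g t * g t = (g t) ^ (2 : ℝ) := by
      rw [Real.rpow_two]; ring
    rw [hgt2, ← hsq]
    apply le_csInf ((hne t).image _)
    rintro b ⟨a, ⟨j, rfl⟩, rfl⟩
    have htA : 0 ≤ t / A := div_nonneg ht hA.le
    show g (t / A) ≤ (t ^ j * M j) ^ (2 : ℝ)
    calc g (t / A) ≤ (t / A) ^ (j + j) * M (j + j) := hgle _ htA _
      _ ≤ (t / A) ^ (j + j) * (A ^ (j + j) * M j * M j) :=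
          mul_le_mul_of_nonneg_left (hmodA j j) (pow_nonneg htA _)
      _ = (t ^ j * M j) ^ (2 : ℝ) := by
          rw [Real.rpow_two]
          field_simp
          rw [div_pow, div_mul_cancel₀ _ (pow_ne_zero _ hA.ne')]
          ring
  -- iterate: g (t / A^m) ≤ (g t)^(2^m)
  have keyIter : ∀ m : ℕ, ∀ t : ℝ, 0 ≤ t → g (t / A ^ m) ≤ (g t) ^ (2 ^ m : ℕ) := by
    intro m
    induction m with
    | zero => intro t ht; simp
    | succ m ih =>
      intro t ht
      have ht' : 0 ≤ t / A ^ m := div_nonneg ht (pow_nonneg hA.le m)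
      have h1 : t / A ^ (m + 1) = (t / A ^ m) / A := by
        rw [pow_succ, ← div_div]
      calc g (t / A ^ (m + 1)) = g ((t / A ^ m) / A) := by rw [h1]
        _ ≤ g (t / A ^ m) * g (t / A ^ m) := keyA _ ht'
        _ ≤ (g t) ^ (2 ^ m : ℕ) * (g t) ^ (2 ^ m : ℕ) :=
            mul_le_mul (ih t ht) (ih t ht) (hg0 _ ht') (pow_nonneg (hg0 t ht) _)
        _ = (g t) ^ (2 ^ (m + 1) : ℕ) := by rw [← pow_add]; congr 1; ring
  -- constants
  set cr : ℝ := c ^ (1 / s) with hcrdef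
  have hcr : 0 < cr := Real.rpow_pos_of_pos hc _
  set m : ℕ := ⌈s⌉₊ with hmdef
  have hs2m : s ≤ ((2 ^ m : ℕ) : ℝ) := by
    calc s ≤ (m : ℝ) := Nat.le_ceil s
      _ ≤ ((2 ^ m : ℕ) : ℝ) := by exact_mod_cast (Nat.lt_two_pow_self (n := m)).le
  refine ⟨cr / A ^ m, cr, div_pos hcr (pow_pos hA m), hcr, 1, one_pos, ?_⟩
  intro t ht _
  set t' : ℝ := cr * t with ht'def
  have ht' : 0 ≤ t' := mul_nonneg hcr.le ht.le
  have hθt : θ t = t' ^ s := by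
    rw [hθ, ht'def, Real.mul_rpow hcr.le ht.le, hcrdef, ← Real.rpow_mul hc.le,
      one_div_mul_cancel (ne_of_gt hs0), Real.rpow_one]
  have hθnn : 0 ≤ θ t := by
    rw [hθt]; exact Real.rpow_nonneg ht' s
  -- hNfn (θ t) = (g t')^s
  have helem : ∀ j : ℕ, (t' ^ j * M j) ^ s = (θ t) ^ j * N j := by
    intro j
    rw [Real.mul_rpow (pow_nonneg ht' j) (hpos j).le, hN, hθt,
      ← Real.rpow_natCast t' j, ← Real.rpow_mul ht', mul_comm (j : ℝ) s,
      Real.rpow_mul ht', Real.rpow_natCast]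
  have hNθ : hNfn (θ t) = (g t') ^ s := by
    rw [hhN _ hθnn, ← stmt6_sInf_rpow hs0 (hne t') (hbdd t' ht') (hSnn t' ht')]
    congr 1
    ext y
    constructor
    · rintro ⟨j, rfl⟩
      exact ⟨t' ^ j * M j, hmem t' j, helem j⟩
    · rintro ⟨a, ⟨j, rfl⟩, rfl⟩
      exact ⟨j, helem j⟩
  set x : ℝ := g t' with hxdef
  have hx0 : 0 ≤ x := hg0 t' ht'
  have hx1 : x ≤ 1 := hg1 t' ht'
  constructor
  · -- lower bound
    have harg : (cr / A ^ m) * t = t' / A ^ m := by rw [ht'def]; ring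
    have hargnn : 0 ≤ t' / A ^ m := div_nonneg ht' (pow_nonneg hA.le m)
    rw [harg, hhM _ hargnn, hNθ]
    calc sInf (S (t' / A ^ m)) ≤ x ^ (2 ^ m : ℕ) := keyIter m t' ht'
      _ ≤ x ^ s := by
          rcases eq_or_lt_of_le hx0 with h | h
          · rw [← h, zero_pow (Nat.pos_of_ne_zero (by positivity)).ne',
              Real.zero_rpow (ne_of_gt hs0)]
          · rw [← Real.rpow_natCast x (2 ^ m)]
            exact Real.rpow_le_rpow_of_exponent_ge h hx1 hs2m
  · -- upper bound
    rw [hNθ, hhM _ ht']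
    show x ^ s ≤ x
    rcases eq_or_lt_of_le hx0 with h | h
    · rw [← h, Real.zero_rpow (ne_of_gt hs0)]
    · calc x ^ s ≤ x ^ (1 : ℝ) := Real.rpow_le_rpow_of_exponent_ge h hx1 hs
        _ = x := Real.rpow_one x
end

section
/- Bochnak–Łojasiewicz consequence: if f is a real-analytic germ at 0 ∈ ℝⁿ with f(0) = 0 and X is a real-analytic set germ with vanishing ideal I_X, then the real critical set S_f = {x : ∇f(x) = 0} contains X if and only if f belongs to the primitive ideal ∫I_X = {g ∈ I_X : ∂g/∂x_j ∈ I_X for all j}. -/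
open Filter

theorem stmt_12_general (n : ℕ) (f : EuclideanSpace ℝ (Fin n) → ℝ)
    (X : Set (EuclideanSpace ℝ (Fin n)))
    (hBL : ∃ C : ℝ, 0 < C ∧ ∀ᶠ x in nhds (0 : EuclideanSpace ℝ (Fin n)),
      |f x| ≤ C * ‖x‖ * ‖fderiv ℝ f x‖) :
    (∀ᶠ x in nhds (0 : EuclideanSpace ℝ (Fin n)), x ∈ X → fderiv ℝ f x = 0) ↔
      (∀ᶠ x in nhds (0 : EuclideanSpace ℝ (Fin n)), x ∈ X → f x = 0 ∧ fderiv ℝ f x = 0) := by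
  obtain ⟨C, -, hBL⟩ := hBL
  refine ⟨fun hcrit => ?_, fun h => h.mono fun x hx hxX => (hx hxX).2⟩
  filter_upwards [hcrit, hBL] with x hcrit hBL hxX
  have hdf : fderiv ℝ f x = 0 := hcrit hxX
  have hf : |f x| ≤ 0 := by simpa only [hdf, norm_zero, mul_zero] using hBL
  exact ⟨abs_nonpos_iff.mp hf, hdf⟩

/-- Bochnak–Łojasiewicz consequence: for a real-analytic germ `f` at `0` with `f 0 = 0`
and a real-analytic set germ `X`, the critical set `S_f = {x | ∇f x = 0}` contains `X`
(as germs) iff `f` belongs to the primitive ideal `∫I_X`, i.e. `f` and all its first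
partial derivatives vanish on `X` near `0`.  The Bochnak–Łojasiewicz inequality
`|f x| ≤ C ‖x‖ ‖∇f x‖` is assumed. -/
theorem stmt_12 (n : ℕ) (f : EuclideanSpace ℝ (Fin n) → ℝ)
    (hf : AnalyticAt ℝ f 0) (hf0 : f 0 = 0)
    (X : Set (EuclideanSpace ℝ (Fin n)))
    (hX : ∃ (p : ℕ) (ψ : Fin p → EuclideanSpace ℝ (Fin n) → ℝ),
      (∀ i, AnalyticAt ℝ (ψ i) 0) ∧
      ∀ᶠ x in nhds (0 : EuclideanSpace ℝ (Fin n)), (x ∈ X ↔ ∀ i, ψ i x = 0))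
    (hBL : ∃ C : ℝ, 0 < C ∧ ∀ᶠ x in nhds (0 : EuclideanSpace ℝ (Fin n)),
      |f x| ≤ C * ‖x‖ * ‖fderiv ℝ f x‖) :
    (∀ᶠ x in nhds (0 : EuclideanSpace ℝ (Fin n)), x ∈ X → fderiv ℝ f x = 0) ↔
      (∀ᶠ x in nhds (0 : EuclideanSpace ℝ (Fin n)), x ∈ X → f x = 0 ∧ fderiv ℝ f x = 0) :=
  stmt_12_general n f X hBL
end

section
/- For f(x₁,x₂) = (x₁² + x₂⁴)², the distance of a real point x ∈ ℝ² to the complex zero set Z_f = {z ∈ ℂ² : z₁² + z₂⁴ = 0} is comparable to |x₁| + x₂²: there exist constants c, C > 0 such that c(|x₁| + x₂²) ≤ dist(x, Z_f) ≤ C(|x₁| + x₂²) for all x in a neighborhood of 0 in ℝ². -/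
open Metric Filter

lemma euclid_coord_dist_le {𝕜 : Type*} [RCLike 𝕜] {n : ℕ}
    (x y : EuclideanSpace 𝕜 (Fin n)) (i : Fin n) :
    dist (x i) (y i) ≤ dist x y := by
  rw [EuclideanSpace.dist_eq]
  have h1 : dist (x i) (y i) ^ 2 ≤ ∑ j, dist (x j) (y j) ^ 2 :=
    Finset.single_le_sum (f := fun j => dist (x j) (y j) ^ 2)
      (fun j _ => sq_nonneg _) (Finset.mem_univ i)
  calc dist (x i) (y i) = Real.sqrt (dist (x i) (y i) ^ 2) := (Real.sqrt_sq dist_nonneg).symm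
    _ ≤ _ := Real.sqrt_le_sqrt h1

lemma norm_real_sub_I_mul_sq (a b : ℝ) :
    ‖(a : ℂ) - Complex.I * (b : ℂ) ^ 2‖ = Real.sqrt (a ^ 2 + b ^ 4) := by
  have : (a : ℂ) - Complex.I * (b : ℂ) ^ 2 = (a : ℂ) + ((-(b ^ 2) : ℝ) : ℂ) * Complex.I := by
    push_cast; ring
  rw [this, Complex.norm_add_mul_I]
  ring_nf

lemma norm_real_add_I_mul_sq (a b : ℝ) :
    ‖(a : ℂ) + Complex.I * (b : ℂ) ^ 2‖ = Real.sqrt (a ^ 2 + b ^ 4) := by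
  have : (a : ℂ) + Complex.I * (b : ℂ) ^ 2 = (a : ℂ) + (((b ^ 2) : ℝ) : ℂ) * Complex.I := by
    push_cast; ring
  rw [this, Complex.norm_add_mul_I]
  ring_nf

/-- For `f(x) = (x₁² + x₂⁴)²`, the distance from a real point `x ∈ ℝ²` to the complex
zero set `Z = {z ∈ ℂ² | z₁² + z₂⁴ = 0}` is comparable to `|x₁| + x₂²` near `0`. -/
theorem stmt_13
    (Z : Set (EuclideanSpace ℂ (Fin 2)))
    (hZ : Z = {z : EuclideanSpace ℂ (Fin 2) | z 0 ^ 2 + z 1 ^ 4 = 0})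
    (emb : EuclideanSpace ℝ (Fin 2) → EuclideanSpace ℂ (Fin 2))
    (hemb : ∀ x i, emb x i = (x i : ℂ)) :
    ∃ c C : ℝ, 0 < c ∧ 0 < C ∧
      ∀ᶠ x in nhds (0 : EuclideanSpace ℝ (Fin 2)),
        c * (|x 0| + (x 1) ^ 2) ≤ infDist (emb x) Z ∧
        infDist (emb x) Z ≤ C * (|x 0| + (x 1) ^ 2) := by
  have hZne : Z.Nonempty := ⟨0, by simp [hZ]⟩
  refine ⟨1/4, 1, by norm_num, one_pos, ?_⟩
  filter_upwards [Metric.ball_mem_nhds 0 (show (0:ℝ) < 1/16 by norm_num)] with x hx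
  set a : ℝ := x 0 with ha
  set b : ℝ := x 1 with hb
  set M : ℝ := |a| + b ^ 2 with hM
  have hM0 : 0 ≤ M := by positivity
  -- coordinate bounds from the ball
  have hxd : dist x 0 < 1/16 := mem_ball.mp hx
  have hcoord : ∀ i, |x i| < 1/16 := by
    intro i
    have h := euclid_coord_dist_le x 0 i
    have h0 : (0 : EuclideanSpace ℝ (Fin 2)) i = 0 := rfl
    rw [h0, Real.dist_eq, sub_zero] at h
    linarith
  have hbsmall : |b| < 1/16 := hcoord 1
  have hasmall : |a| < 1/16 := hcoord 0
  have hb2 : b ^ 2 < 1/256 := by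
    have := sq_abs b
    nlinarith [hbsmall, abs_nonneg b]
  have hMsmall : M < 1/8 := by rw [hM]; nlinarith
  -- the witness point for the upper bound
  set z₀ : EuclideanSpace ℂ (Fin 2) :=
    (WithLp.equiv 2 (Fin 2 → ℂ)).symm ![Complex.I * (b:ℂ)^2, (b:ℂ)] with hz₀
  have hz₀0 : z₀ 0 = Complex.I * (b:ℂ)^2 := rfl
  have hz₀1 : z₀ 1 = (b:ℂ) := rfl
  have hz₀mem : z₀ ∈ Z := by
    rw [hZ]
    simp only [Set.mem_setOf_eq, hz₀0, hz₀1]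
    have : Complex.I ^ 2 = -1 := Complex.I_sq
    ring_nf
    rw [this]; ring
  have hdist0 : dist (emb x) z₀ = Real.sqrt (a ^ 2 + b ^ 4) := by
    rw [EuclideanSpace.dist_eq, Fin.sum_univ_two, hemb, hemb, hz₀0, hz₀1]
    rw [dist_eq_norm, dist_eq_norm]
    rw [norm_real_sub_I_mul_sq a b]
    simp [← hb, Real.sq_sqrt (by positivity : (0:ℝ) ≤ a ^ 2 + b ^ 4)]
  have hsqrt_le : Real.sqrt (a ^ 2 + b ^ 4) ≤ M := by
    rw [hM, show |a| + b ^ 2 = Real.sqrt ((|a| + b ^ 2) ^ 2) from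
      (Real.sqrt_sq (by positivity)).symm]
    apply Real.sqrt_le_sqrt
    nlinarith [abs_nonneg a, sq_abs a]
  have hsqrt_ge : M / 2 ≤ Real.sqrt (a ^ 2 + b ^ 4) := by
    have h1 : |a| ≤ Real.sqrt (a ^ 2 + b ^ 4) := by
      rw [show |a| = Real.sqrt (a^2) by rw [Real.sqrt_sq_eq_abs]]
      exact Real.sqrt_le_sqrt (by nlinarith)
    have h2 : b ^ 2 ≤ Real.sqrt (a ^ 2 + b ^ 4) := by
      rw [show b^2 = Real.sqrt ((b^2)^2) from (Real.sqrt_sq (by positivity)).symm]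
      exact Real.sqrt_le_sqrt (by nlinarith)
    rw [hM]; linarith
  constructor
  · -- lower bound
    by_contra hcon
    push_neg at hcon
    obtain ⟨z, hzZ, hzd⟩ := (infDist_lt_iff hZne).mp hcon
    set ζ : ℂ := z 0 with hζ
    set w : ℂ := z 1 with hw
    have hzeq : ζ ^ 2 + w ^ 4 = 0 := by rw [hZ] at hzZ; exact hzZ
    set d : ℝ := dist (emb x) z with hd
    have hd0 : 0 ≤ d := dist_nonneg
    have h0 : ‖(a:ℂ) - ζ‖ ≤ d := by
      have := euclid_coord_dist_le (emb x) z 0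
      rwa [hemb, dist_eq_norm] at this
    have h1 : ‖(b:ℂ) - w‖ ≤ d := by
      have := euclid_coord_dist_le (emb x) z 1
      rwa [hemb, dist_eq_norm] at this
    -- ζ = ± I w²
    have hfac : (ζ - Complex.I * w ^ 2) * (ζ + Complex.I * w ^ 2) = 0 := by
      have : Complex.I ^ 2 = -1 := Complex.I_sq
      calc (ζ - Complex.I * w ^ 2) * (ζ + Complex.I * w ^ 2)
          = ζ ^ 2 - Complex.I ^ 2 * w ^ 4 := by ring
        _ = ζ ^ 2 + w ^ 4 := by rw [this]; ring
        _ = 0 := hzeq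
    -- bound on ‖w² - b²‖
    have hw2 : ‖w ^ 2 - (b:ℂ) ^ 2‖ ≤ d * (d + 2 * |b|) := by
      have hfac2 : w ^ 2 - (b:ℂ) ^ 2 = (w - b) * (w + b) := by ring
      rw [hfac2, norm_mul]
      have hwb : ‖w - (b:ℂ)‖ ≤ d := by
        rw [norm_sub_rev]; exact h1
      have hwpb : ‖w + (b:ℂ)‖ ≤ d + 2 * |b| := by
        have : w + (b:ℂ) = (w - b) + 2 * (b:ℂ) := by ring
        rw [this]
        calc ‖(w - (b:ℂ)) + 2 * (b:ℂ)‖ ≤ ‖w - (b:ℂ)‖ + ‖(2 : ℂ) * (b:ℂ)‖ := norm_add_le _ _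
          _ ≤ d + 2 * |b| := by
              rw [norm_mul]
              simp only [Complex.norm_real, Real.norm_eq_abs]
              have : ‖(2:ℂ)‖ = 2 := by norm_num
              rw [this]
              linarith
      exact mul_le_mul hwb hwpb (norm_nonneg _) hd0
    -- main lower bound on ‖a - ζ‖
    have hkey : Real.sqrt (a ^ 2 + b ^ 4) - d * (d + 2 * |b|) ≤ d := by
      rcases mul_eq_zero.mp hfac with hc | hc
      · -- ζ = I w²
        have hζval : ζ = Complex.I * w ^ 2 := by linear_combination hc
        have : Real.sqrt (a ^ 2 + b ^ 4) ≤ ‖(a:ℂ) - ζ‖ + ‖w ^ 2 - (b:ℂ) ^ 2‖ := by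
          calc Real.sqrt (a ^ 2 + b ^ 4) = ‖(a:ℂ) - Complex.I * (b:ℂ) ^ 2‖ :=
                (norm_real_sub_I_mul_sq a b).symm
            _ = ‖((a:ℂ) - ζ) + Complex.I * (w ^ 2 - (b:ℂ)^2)‖ := by
                rw [hζval]; ring_nf
            _ ≤ ‖(a:ℂ) - ζ‖ + ‖Complex.I * (w ^ 2 - (b:ℂ)^2)‖ := norm_add_le _ _
            _ = ‖(a:ℂ) - ζ‖ + ‖w ^ 2 - (b:ℂ)^2‖ := by rw [norm_mul, Complex.norm_I, one_mul]
        linarith [h0, hw2]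
      · -- ζ = -I w²
        have hζval : ζ = -(Complex.I * w ^ 2) := by linear_combination hc
        have : Real.sqrt (a ^ 2 + b ^ 4) ≤ ‖(a:ℂ) - ζ‖ + ‖w ^ 2 - (b:ℂ) ^ 2‖ := by
          calc Real.sqrt (a ^ 2 + b ^ 4) = ‖(a:ℂ) + Complex.I * (b:ℂ) ^ 2‖ :=
                (norm_real_add_I_mul_sq a b).symm
            _ = ‖((a:ℂ) - ζ) + (-(Complex.I * (w ^ 2 - (b:ℂ)^2)))‖ := by
                rw [hζval]; ring_nf
            _ ≤ ‖(a:ℂ) - ζ‖ + ‖-(Complex.I * (w ^ 2 - (b:ℂ)^2))‖ := norm_add_le _ _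
            _ = ‖(a:ℂ) - ζ‖ + ‖w ^ 2 - (b:ℂ)^2‖ := by
                rw [norm_neg, norm_mul, Complex.norm_I, one_mul]
        linarith [h0, hw2]
    -- derive the contradiction
    have hdM : d < 1/4 * M := hzd
    have habs : 0 ≤ |b| := abs_nonneg b
    nlinarith [hsqrt_ge, hkey, hdM, hd0, hMsmall, hbsmall, hM0]
  · -- upper bound
    calc infDist (emb x) Z ≤ dist (emb x) z₀ := infDist_le_dist_of_mem hz₀mem
      _ = Real.sqrt (a ^ 2 + b ^ 4) := hdist0
      _ ≤ M := hsqrt_le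
      _ = 1 * (|x 0| + (x 1) ^ 2) := by rw [one_mul, hM, ha, hb]
end

section
/- For n = 2 with ψ(x) = (x₁, x₂) (so ⟨ψ⟩ is the maximal ideal of O₂) and f ∈ O₂ with ∇f ∈ ⟨ψ⟩·O₂², the Fitting ideal K_f associated with ψ and ∇f contains the germs x_k^{0}·∂f/∂x_j for all j, k; more generally for n ≥ 2 with ψ(x) = x, K_f contains x_k^{n-2}·∂f/∂x_j for all 1 ≤ j, k ≤ n, and hence contains |x|^{2n}·∂f/∂x_j for j = 1, …, n. -/
open Metric Set Filter

/-- `f` lies in the ideal generated by `φ₁,…,φ_q` in the ring of real-analytic germs at `0`. -/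
def InAnIdeal (n q : ℕ) (φ : Fin q → EuclideanSpace ℝ (Fin n) → ℝ)
    (f : EuclideanSpace ℝ (Fin n) → ℝ) : Prop :=
  ∃ a : Fin q → EuclideanSpace ℝ (Fin n) → ℝ,
    (∀ j, AnalyticAt ℝ (a j) 0) ∧
    ∀ᶠ x in nhds (0 : EuclideanSpace ℝ (Fin n)), f x = ∑ j, a j x * φ j x

/-- `v ∈ M = σ⁻¹(⟨φ⟩)`, where `σ(f₁,…,f_p) = Σ f_i ψ_i`. -/
def InSigmaInv (n p q : ℕ) (ψ : Fin p → EuclideanSpace ℝ (Fin n) → ℝ)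
    (φ : Fin q → EuclideanSpace ℝ (Fin n) → ℝ)
    (v : Fin p → EuclideanSpace ℝ (Fin n) → ℝ) : Prop :=
  (∀ i, AnalyticAt ℝ (v i) 0) ∧
    InAnIdeal n q φ (fun x => ∑ i, v i x * ψ i x)

/-- `g` lies in the Fitting ideal `K = Fitt₀(O_nᵖ/σ⁻¹⟨φ⟩)`, generated by determinants of
`p × p` matrices of analytic germs whose columns lie in `σ⁻¹⟨φ⟩`. -/
def InFitt (n p q : ℕ) (ψ : Fin p → EuclideanSpace ℝ (Fin n) → ℝ)
    (φ : Fin q → EuclideanSpace ℝ (Fin n) → ℝ)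
    (g : EuclideanSpace ℝ (Fin n) → ℝ) : Prop :=
  ∃ (m : ℕ) (c : Fin m → EuclideanSpace ℝ (Fin n) → ℝ)
    (A : Fin m → Fin p → Fin p → EuclideanSpace ℝ (Fin n) → ℝ),
    (∀ l, AnalyticAt ℝ (c l) 0) ∧
    (∀ l i j, AnalyticAt ℝ (A l i j) 0) ∧
    (∀ l j, InSigmaInv n p q ψ φ (fun i => A l i j)) ∧
    ∀ᶠ x in nhds (0 : EuclideanSpace ℝ (Fin n)),
      g x = ∑ l, c l x * (Matrix.of fun i j => A l i j x).det

section Aux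
open Matrix

variable {R : Type*} [CommRing R]

/-- rank one update of scalar matrix -/
def rk1 (n : ℕ) (a : R) (u v : Fin n → R) : Matrix (Fin n) (Fin n) R :=
  a • (1 : Matrix (Fin n) (Fin n) R) + Matrix.replicateCol Unit u * Matrix.replicateRow Unit v

lemma rk1_apply (n : ℕ) (a : R) (u v : Fin n → R) (i j : Fin n) :
    rk1 n a u v i j = a * (if i = j then 1 else 0) + u i * v j := by
  simp [rk1, Matrix.mul_apply, Matrix.one_apply, mul_ite, mul_one, mul_zero]

lemma rk1_map {S : Type*} [CommRing S] (f : R →+* S) (n : ℕ) (a : R) (u v : Fin n → R) :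
    (rk1 n a u v).map f = rk1 n (f a) (f ∘ u) (f ∘ v) := by
  ext i j
  simp [Matrix.map_apply, rk1_apply, apply_ite]

lemma rk1_det_field {F : Type*} [Field F] (n : ℕ) (hn : 1 ≤ n) (a : F) (ha : a ≠ 0)
    (u v : Fin n → F) : (rk1 n a u v).det = a ^ (n - 1) * (a + v ⬝ᵥ u) := by
  have h1 : rk1 n a u v = a • ((1 : Matrix (Fin n) (Fin n) F) + Matrix.replicateCol Unit (a⁻¹ • u) * Matrix.replicateRow Unit v) := by
    rw [smul_add, rk1]
    congr 1
    rw [Matrix.replicateCol_smul, Matrix.smul_mul, smul_smul, mul_inv_cancel₀ ha, one_smul]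
  rw [h1, det_smul, det_one_add_replicateCol_mul_replicateRow, Fintype.card_fin]
  rw [dotProduct_smul]
  field_simp
  have hpow : a ^ n = a ^ (n - 1) * a := by rw [← pow_succ, Nat.sub_add_cancel hn]
  rw [hpow]; linear_combination (a ^ (n - 1) * v ⬝ᵥ u) * mul_inv_cancel₀ ha

noncomputable section
open MvPolynomial

abbrev PA (n : ℕ) := MvPolynomial (Unit ⊕ (Fin n ⊕ Fin n)) ℤ

def pA (n : ℕ) : PA n := X (Sum.inl ())
def pU (n : ℕ) (i : Fin n) : PA n := X (Sum.inr (Sum.inl i))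
def pV (n : ℕ) (i : Fin n) : PA n := X (Sum.inr (Sum.inr i))

lemma rk1_det_poly (n : ℕ) (hn : 1 ≤ n) :
    (rk1 n (pA n) (pU n) (pV n)).det = (pA n) ^ (n - 1) * (pA n + (pV n) ⬝ᵥ (pU n)) := by
  set K := FractionRing (PA n)
  have hinj : Function.Injective (algebraMap (PA n) K) := IsFractionRing.injective _ _
  have ha : algebraMap (PA n) K (pA n) ≠ 0 :=
    (map_ne_zero_iff _ hinj).mpr (X_ne_zero _)
  apply hinj
  rw [RingHom.map_det, RingHom.mapMatrix_apply, rk1_map, rk1_det_field n hn _ ha]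
  simp [dotProduct, map_sum, Function.comp]

def evh (n : ℕ) (a : R) (u v : Fin n → R) : PA n →+* R :=
  (MvPolynomial.eval₂Hom (Int.castRingHom R) (Sum.elim (fun _ => a) (Sum.elim u v)))

@[simp] lemma evh_A (n : ℕ) (a : R) (u v : Fin n → R) : evh n a u v (pA n) = a := by
  simp [evh, pA]
@[simp] lemma evh_U (n : ℕ) (a : R) (u v : Fin n → R) (i : Fin n) :
    evh n a u v (pU n i) = u i := by simp [evh, pU]
@[simp] lemma evh_V (n : ℕ) (a : R) (u v : Fin n → R) (i : Fin n) :
    evh n a u v (pV n i) = v i := by simp [evh, pV]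

lemma rk1_det (n : ℕ) (hn : 1 ≤ n) (a : R) (u v : Fin n → R) :
    (rk1 n a u v).det = a ^ (n - 1) * (a + v ⬝ᵥ u) := by
  have := congrArg (evh n a u v) (rk1_det_poly n hn)
  rw [RingHom.map_det, RingHom.mapMatrix_apply, rk1_map] at this
  have hU : (evh n a u v) ∘ pU n = u := funext fun i => evh_U n a u v i
  have hV : (evh n a u v) ∘ pV n = v := funext fun i => evh_V n a u v i
  rw [hU, hV, evh_A] at this
  simpa [dotProduct, map_sum] using this

lemma crcr (n : ℕ) (u v : Fin n → R) :
    (Matrix.replicateCol Unit u * Matrix.replicateRow Unit v) * (Matrix.replicateCol Unit u * Matrix.replicateRow Unit v)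
      = (v ⬝ᵥ u) • (Matrix.replicateCol Unit u * Matrix.replicateRow Unit v) := by
  ext i j
  simp only [Matrix.mul_apply, Matrix.replicateCol_apply, Matrix.replicateRow_apply, Matrix.smul_apply,
    Finset.univ_unique, Finset.sum_singleton, dotProduct, smul_eq_mul, Finset.sum_mul,
    Finset.mul_sum]
  exact Finset.sum_congr rfl fun t _ => by ring

lemma rk1_mulC (n : ℕ) (a : R) (u v : Fin n → R) :
    rk1 n a u v * ((a + v ⬝ᵥ u) • (1 : Matrix (Fin n) (Fin n) R) - Matrix.replicateCol Unit u * Matrix.replicateRow Unit v)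
      = (a * (a + v ⬝ᵥ u)) • (1 : Matrix (Fin n) (Fin n) R) := by
  set cr := Matrix.replicateCol Unit u * Matrix.replicateRow Unit v with hcr
  set s := v ⬝ᵥ u with hs
  rw [rk1, ← hcr]
  simp only [add_mul, Matrix.mul_sub, Matrix.smul_mul, Matrix.mul_smul, Matrix.one_mul,
    Matrix.mul_one]
  rw [crcr, ← hcr, ← hs]
  module

def adjC (n : ℕ) (a : R) (u v : Fin n → R) : Matrix (Fin n) (Fin n) R :=
  a ^ (n - 2) • ((a + v ⬝ᵥ u) • (1 : Matrix (Fin n) (Fin n) R) - Matrix.replicateCol Unit u * Matrix.replicateRow Unit v)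

lemma adjC_apply (n : ℕ) (a : R) (u v : Fin n → R) (i j : Fin n) :
    adjC n a u v i j = a ^ (n - 2) * ((a + v ⬝ᵥ u) * (if i = j then 1 else 0) - u i * v j) := by
  simp [adjC, Matrix.mul_apply, Matrix.one_apply, mul_ite, mul_one, mul_zero]

lemma adjC_map {S : Type*} [CommRing S] (f : R →+* S) (n : ℕ) (a : R) (u v : Fin n → R) :
    (adjC n a u v).map f = adjC n (f a) (f ∘ u) (f ∘ v) := by
  ext i j
  simp [Matrix.map_apply, adjC_apply, apply_ite, dotProduct, map_sum]

lemma rk1_mulC' (n : ℕ) (hn : 2 ≤ n) (a : R) (u v : Fin n → R) :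
    rk1 n a u v * adjC n a u v = (rk1 n a u v).det • (1 : Matrix (Fin n) (Fin n) R) := by
  rw [adjC, Matrix.mul_smul, rk1_mulC, smul_smul, rk1_det n (by omega) a u v]
  congr 1
  have : a ^ (n - 2) * a = a ^ (n - 1) := by
    rw [← pow_succ]; congr 1; omega
  rw [← mul_assoc, this]

lemma rk1_adj_poly (n : ℕ) (hn : 2 ≤ n) :
    adjugate (rk1 n (pA n) (pU n) (pV n)) = adjC n (pA n) (pU n) (pV n) := by
  set K := FractionRing (PA n)
  set φ := algebraMap (PA n) K with hφ
  have hinj : Function.Injective φ := IsFractionRing.injective _ _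
  have ha : φ (pA n) ≠ 0 := (map_ne_zero_iff _ hinj).mpr (X_ne_zero _)
  have hsum : (pA n + pV n ⬝ᵥ pU n) ≠ 0 := by
    intro h
    have := congrArg (MvPolynomial.eval (Sum.elim (fun _ => (1:ℤ)) (fun _ => 0))) h
    simp [pA, pU, pV, dotProduct] at this
  have hs : φ (pA n + pV n ⬝ᵥ pU n) ≠ 0 := (map_ne_zero_iff _ hinj).mpr hsum
  have hdet' : (rk1 n (φ (pA n)) (φ ∘ pU n) (φ ∘ pV n)).det ≠ 0 := by
    rw [rk1_det n (by omega)]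
    refine mul_ne_zero (pow_ne_zero _ ha) ?_
    have : φ (pA n) + (φ ∘ pV n) ⬝ᵥ (φ ∘ pU n) = φ (pA n + pV n ⬝ᵥ pU n) := by
      simp [dotProduct, map_sum, Function.comp]
    rw [this]; exact hs
  have hu : IsUnit (rk1 n (φ (pA n)) (φ ∘ pU n) (φ ∘ pV n)) :=
    (Matrix.isUnit_iff_isUnit_det _).mpr hdet'.isUnit
  have key : adjugate (rk1 n (φ (pA n)) (φ ∘ pU n) (φ ∘ pV n))
      = adjC n (φ (pA n)) (φ ∘ pU n) (φ ∘ pV n) := by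
    apply hu.mul_left_cancel
    rw [Matrix.mul_adjugate, rk1_mulC' n hn]
  have hmap := RingHom.map_adjugate φ (rk1 n (pA n) (pU n) (pV n))
  rw [RingHom.mapMatrix_apply, RingHom.mapMatrix_apply, rk1_map, key] at hmap
  have : (adjC n (pA n) (pU n) (pV n)).map φ = adjC n (φ (pA n)) (φ ∘ pU n) (φ ∘ pV n) :=
    adjC_map φ n _ _ _
  rw [← this] at hmap
  exact Matrix.ext fun i j => hinj (congrFun (congrFun hmap i) j)

lemma rk1_adj (n : ℕ) (hn : 2 ≤ n) (a : R) (u v : Fin n → R) :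
    adjugate (rk1 n a u v) = adjC n a u v := by
  have := congrArg (RingHom.mapMatrix (evh n a u v)) (rk1_adj_poly n hn)
  rw [RingHom.map_adjugate, RingHom.mapMatrix_apply, RingHom.mapMatrix_apply, rk1_map,
    adjC_map] at this
  have hU : (evh n a u v) ∘ pU n = u := funext fun i => evh_U n a u v i
  have hV : (evh n a u v) ∘ pV n = v := funext fun i => evh_V n a u v i
  rw [hU, hV, evh_A] at this
  exact this

lemma key_det (n : ℕ) (hn : 2 ≤ n) (k : Fin n) (x h b : Fin n → R) :
    (Matrix.of fun i c => if c = k then h i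
        else (∑ t, b t * x t) * (if i = c then (1:R) else 0) - b i * x c).det
      = (∑ t, b t * x t) ^ (n - 2) * (b k * ∑ i, x i * h i) := by
  set a := ∑ t, b t * x t with ha
  have hM : (Matrix.of fun i c => if c = k then h i
        else a * (if i = c then (1:R) else 0) - b i * x c)
      = Matrix.updateCol (rk1 n a (-b) x) k h := by
    ext i c
    rw [Matrix.updateCol_apply, Matrix.of_apply]
    by_cases hc : c = k
    · simp [hc]
    · simp only [hc, if_false, rk1_apply, Pi.neg_apply]
      ring
  rw [hM, ← Matrix.cramer_apply, Matrix.cramer_eq_adjugate_mulVec, rk1_adj n hn]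
  simp only [Matrix.mulVec, dotProduct, adjC_apply, Pi.neg_apply]
  have h0 : a + ∑ t, x t * -b t = 0 := by
    rw [ha, ← Finset.sum_add_distrib]
    exact Finset.sum_eq_zero fun t _ => by ring
  rw [h0]
  simp only [zero_mul, zero_sub, neg_neg, Finset.mul_sum]
  apply Finset.sum_congr rfl
  intro i _
  ring
lemma InFitt_congr {n p q : ℕ} {ψ : Fin p → EuclideanSpace ℝ (Fin n) → ℝ}
    {φ : Fin q → EuclideanSpace ℝ (Fin n) → ℝ} {g g' : EuclideanSpace ℝ (Fin n) → ℝ}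
    (hg : ∀ x, g x = g' x) (h : InFitt n p q ψ φ g') : InFitt n p q ψ φ g := by
  obtain ⟨m, c, A, h1, h2, h3, h4⟩ := h
  exact ⟨m, c, A, h1, h2, h3, h4.mono fun x hx => (hg x).trans hx⟩

lemma sum_ite_one_mul {n : ℕ} (F : Fin n → ℝ) (j : Fin n) :
    ∑ t, (if t = j then (1:ℝ) else 0) * F t = F j := by
  simp [ite_mul]

lemma master (n : ℕ) (hn : 2 ≤ n)
    (pd : Fin n → EuclideanSpace ℝ (Fin n) → ℝ)
    (ψ : Fin n → EuclideanSpace ℝ (Fin n) → ℝ) (hψ : ∀ i x, ψ i x = x i)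
    (j : Fin n) (hgradj : InAnIdeal n n ψ (pd j))
    (b : Fin n → EuclideanSpace ℝ (Fin n) → ℝ) (hb : ∀ t, AnalyticAt ℝ (b t) 0)
    (w : Fin n → EuclideanSpace ℝ (Fin n) → ℝ) (hw : ∀ l, AnalyticAt ℝ (w l) 0) :
    InFitt n n n ψ pd (fun x =>
      ∑ l, w l x * ((∑ t, b t x * x t) ^ (n - 2) * (b l x * pd j x))) := by
  classical
  obtain ⟨h, hh, hhe⟩ := hgradj
  have hcoord : ∀ i : Fin n, AnalyticAt ℝ (fun x : EuclideanSpace ℝ (Fin n) => x i) 0 :=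
    fun i => ((EuclideanSpace.proj i : EuclideanSpace ℝ (Fin n) →L[ℝ] ℝ)).analyticAt 0
  have haa : AnalyticAt ℝ (fun x : EuclideanSpace ℝ (Fin n) => ∑ t, b t x * x t) 0 := by
    apply Finset.analyticAt_fun_sum
    intro t _
    exact (hb t).mul (hcoord t)
  set A : Fin n → Fin n → Fin n → EuclideanSpace ℝ (Fin n) → ℝ := fun l i c x =>
    if c = l then h i x else (∑ t, b t x * x t) * (if i = c then 1 else 0) - b i x * x c
    with hA_def
  have hA : ∀ l i c, AnalyticAt ℝ (A l i c) 0 := by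
    intro l i c
    by_cases hc : c = l
    · simpa [hA_def, hc] using hh i
    · simp only [hA_def, hc, if_false]
      exact (haa.mul analyticAt_const).sub ((hb i).mul (hcoord c))
  have hhe' : ∀ᶠ x in nhds (0 : EuclideanSpace ℝ (Fin n)), pd j x = ∑ i, x i * h i x := by
    filter_upwards [hhe] with x hx
    rw [hx]
    exact Finset.sum_congr rfl fun i _ => by rw [hψ]; ring
  refine ⟨n, w, A, hw, hA, ?_, ?_⟩
  · intro l c
    refine ⟨fun i => hA l i c, ?_⟩
    by_cases hc : c = l
    · refine ⟨fun t _ => if t = j then 1 else 0, fun t => analyticAt_const, ?_⟩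
      filter_upwards [hhe] with x hx
      rw [sum_ite_one_mul (fun t => pd t x) j]
      simp only [hA_def, hc, if_pos]
      exact hx.symm
    · refine ⟨fun _ _ => 0, fun t => analyticAt_const, Eventually.of_forall fun x => ?_⟩
      simp only [hA_def, hc, if_false, zero_mul, Finset.sum_const_zero, hψ, sub_mul]
      rw [Finset.sum_sub_distrib]
      have e1 : ∑ i, ((∑ t, b t x * x t) * (if i = c then (1:ℝ) else 0)) * x i
          = (∑ t, b t x * x t) * x c := by
        have : ∀ i : Fin n, ((∑ t, b t x * x t) * (if i = c then (1:ℝ) else 0)) * x i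
            = if i = c then (∑ t, b t x * x t) * x i else 0 := by
          intro i; split <;> simp
        rw [Finset.sum_congr rfl fun i _ => this i]
        simp
      have e2 : ∑ i, (b i x * x c) * x i = (∑ t, b t x * x t) * x c := by
        rw [Finset.sum_mul]
        exact Finset.sum_congr rfl fun i _ => by ring
      rw [e1, e2, sub_self]
  · filter_upwards [hhe'] with x hx
    apply Finset.sum_congr rfl
    intro l _
    have hdet := key_det (R := ℝ) n hn l (fun i => x i) (fun i => h i x) (fun i => b i x)
    have hmat : (Matrix.of fun i c => A l i c x)
        = Matrix.of fun i c => if c = l then h i x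
            else (∑ t, b t x * x t) * (if i = c then (1:ℝ) else 0) - b i x * x c := rfl
    rw [hmat, hdet, ← hx]

end

end Aux

/-- For `ψ(x) = x` (so `⟨ψ⟩` is the maximal ideal) and `f` analytic with
`∇f ∈ ⟨x⟩·O_nⁿ`, the Fitting ideal `K_f` associated with `ψ` and `∇f` contains all the
germs `x_k^(n-2) · ∂f/∂x_j`, and hence contains `|x|^(2n) · ∂f/∂x_j` for every `j`. -/
theorem stmt_16 (n : ℕ) (hn : 2 ≤ n)
    (f : EuclideanSpace ℝ (Fin n) → ℝ) (hf : AnalyticAt ℝ f 0) (hf0 : f 0 = 0)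
    (pd : Fin n → EuclideanSpace ℝ (Fin n) → ℝ)
    (hpd : ∀ j x, pd j x = fderiv ℝ f x (EuclideanSpace.single j 1))
    (ψ : Fin n → EuclideanSpace ℝ (Fin n) → ℝ) (hψ : ∀ i x, ψ i x = x i)
    (hgrad : ∀ j, InAnIdeal n n ψ (pd j)) :
    (∀ j k : Fin n, InFitt n n n ψ pd (fun x => (x k) ^ (n - 2) * pd j x)) ∧
    (∀ j : Fin n, InFitt n n n ψ pd (fun x => (∑ i, (x i) ^ 2) ^ n * pd j x)) := by
  classical
  have hcoord : ∀ i : Fin n, AnalyticAt ℝ (fun x : EuclideanSpace ℝ (Fin n) => x i) 0 :=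
    fun i => ((EuclideanSpace.proj i : EuclideanSpace ℝ (Fin n) →L[ℝ] ℝ)).analyticAt 0
  constructor
  · intro j k
    have hm := master n hn pd ψ hψ j (hgrad j)
      (fun t _ => if t = k then 1 else 0) (fun t => analyticAt_const)
      (fun l _ => if l = k then 1 else 0) (fun l => analyticAt_const)
    apply InFitt_congr ?_ hm
    intro x
    show (x k) ^ (n - 2) * pd j x
      = ∑ l, (if l = k then (1:ℝ) else 0)
          * ((∑ t, (if t = k then (1:ℝ) else 0) * x t) ^ (n - 2) * ((if l = k then (1:ℝ) else 0) * pd j x))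
    rw [sum_ite_one_mul (fun t => x t) k]
    have : ∀ l : Fin n, (if l = k then (1:ℝ) else 0)
        * ((x k) ^ (n - 2) * ((if l = k then (1:ℝ) else 0) * pd j x))
        = if l = k then (x k) ^ (n - 2) * pd j x else 0 := by
      intro l; split <;> simp
    rw [Finset.sum_congr rfl fun l _ => this l]
    simp
  · intro j
    have hm := master n hn pd ψ hψ j (hgrad j)
      (fun t x => x t) hcoord
      (fun l x => x l * ∑ t, (x t) ^ 2)
      (fun l => (hcoord l).mul (Finset.analyticAt_fun_sum _ fun t _ => (hcoord t).pow 2))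
    apply InFitt_congr ?_ hm
    intro x
    show (∑ i, (x i) ^ 2) ^ n * pd j x
      = ∑ l, (x l * ∑ t, (x t) ^ 2) * ((∑ t, x t * x t) ^ (n - 2) * (x l * pd j x))
    have hbx : (∑ t, x t * x t) = ∑ i, (x i) ^ 2 :=
      Finset.sum_congr rfl fun t _ => (pow_two (x t)).symm
    rw [hbx]
    set s := ∑ i, (x i) ^ 2 with hs
    have e1 : ∀ l : Fin n, (x l * s) * (s ^ (n - 2) * (x l * pd j x))
        = (s ^ (n - 2) * s * pd j x) * (x l) ^ 2 := fun l => by ring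
    rw [Finset.sum_congr rfl fun l _ => e1 l, ← Finset.mul_sum, ← hs]
    have e2 : s ^ n = s ^ (n - 2) * s ^ 2 := by
      rw [← pow_add]; congr 1; omega
    rw [e2]; ring
end
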